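/- arXiv:2302.14002 — 10 statements merged into one kernel-verified Lean document; each statement's English description precedes it below -/
import Mathlib

section
/- A vector x ∈ ℝⁿ is the mean score sequence of a random Coxeter tournament of type Cₙ on the complete signed graph (i.e., there exist probabilities p⁻_{ij} ∈ [0,1] with p⁻_{ij} = 1 - p⁻_{ji} for each unordered pair i≠j, probabilities p⁺_{ij} = p⁺_{ji} ∈ [0,1] for each unordered pair i≠j, and probabilities pℓ_i ∈ [0,1] for each i, such that x_i = Σ_{j≠i}(p⁻_{ij} - 1/2) + Σ_{j≠i}(p⁺_{ij} - 1/2) + 2(pℓ_i - 1/2) for all i) if and only if the vector |x| = (|x₁|,…,|xₙ|) is weakly sub-majorized by ρ = (1,2,…,n). -/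
open Finset

/-- `u` is weakly sub-majorized by `v`: for every `k`, the sum of the `k` largest
entries of `u` is at most the sum of the `k` largest entries of `v`. -/
def WeakSubMaj {α β : Type*} [Fintype α] [Fintype β] (u : α → ℝ) (v : β → ℝ) : Prop :=
  ∀ S : Finset α, ∃ T : Finset β, T.card = S.card ∧ ∑ i ∈ S, u i ≤ ∑ j ∈ T, v j

/-- `x` is the mean score sequence of a random Coxeter tournament of type `Cₙ`
on the complete signed graph on `n` vertices. -/
def IsMeanScoreSeqC (n : ℕ) (x : Fin n → ℝ) : Prop :=
  ∃ (pm pp : Fin n → Fin n → ℝ) (pl : Fin n → ℝ),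
    (∀ i j, 0 ≤ pm i j ∧ pm i j ≤ 1) ∧
    (∀ i j, i ≠ j → pm i j = 1 - pm j i) ∧
    (∀ i j, 0 ≤ pp i j ∧ pp i j ≤ 1) ∧
    (∀ i j, pp i j = pp j i) ∧
    (∀ i, 0 ≤ pl i ∧ pl i ≤ 1) ∧
    (∀ i, x i = ∑ j ∈ univ.erase i, (pm i j - 1/2)
              + ∑ j ∈ univ.erase i, (pp i j - 1/2)
              + 2 * (pl i - 1/2))

/-!
Write `m i j = p⁻ᵢⱼ + p⁺ᵢⱼ - 1` for the expected net score of `i` from its two games with `j` and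
`e i = 2 pℓᵢ - 1`. The constraints on the probabilities say exactly that `|m i j| + |m j i| ≤ 1` and
`|e i| ≤ 1`, so the mean score sequences form the image of a compact convex set under the linear map
`(m, e) ↦ (∑_{j ≠ i} m i j + e i)ᵢ`.

Necessity is double counting: for `#S = k`, the pairs inside `S` contribute at most `k (k - 1) / 2`
to `∑_{i ∈ S} |x i|`, the pairs leaving `S` at most `k (n - k)` and the loops at most `k`, which
adds up to `n + (n - 1) + ⋯ + (n - k + 1)`. For sufficiency, separate `x` from the image by a functional
`l`. In the transitive tournament where every vertex beats all vertices of smaller `|l i|`, with the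
signs of `l`, the vertex of rank `b` scores `±(b + 1)`; Abel summation against the partial-sum
inequalities of the majorization shows that its `l`-value dominates that of `x`.
-/

-- Abel summation: peel off the smallest weight `w 0` and recurse on the others.
theorem Fin.sum_mul_le_sum_mul_of_sum_Ici_le : ∀ {n : ℕ} {w y z : Fin n → ℝ}, Monotone w →
    (∀ i, 0 ≤ w i) → (∀ c, ∑ i ∈ Ici c, y i ≤ ∑ i ∈ Ici c, z i) →
    ∑ i, w i * y i ≤ ∑ i, w i * z i
  | 0, _, _, _, _, _, _ => by simp
  | n + 1, w, y, z, hw, hw0, hyz => by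
    set w' : Fin n → ℝ := fun i => w i.succ - w 0
    have hpeel : ∀ v : Fin (n + 1) → ℝ, ∑ i, w i * v i = w 0 * ∑ i, v i + ∑ i, w' i * v i.succ := by
      intro v
      simp only [Fin.sum_univ_succ, w', sub_mul, sum_sub_distrib, mul_add, mul_sum]
      ring
    have htail := Fin.sum_mul_le_sum_mul_of_sum_Ici_le (w := w') (y := fun i => y i.succ)
      (z := fun i => z i.succ) (fun a b h => sub_le_sub_right (hw (Fin.succ_le_succ_iff.2 h)) _)
      (fun i => sub_nonneg.2 (hw (Fin.zero_le _)))
      (fun c => by simpa [← Fin.map_succEmb_Ici, sum_map] using hyz c.succ)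
    have hhead := mul_le_mul_of_nonneg_left (by simpa using hyz 0) (hw0 0)
    rw [hpeel, hpeel]
    linarith

theorem Finset.sum_sum_erase_le {ι : Type*} [DecidableEq ι] (S : Finset ι) (g : ι → ι → ℝ)
    (hg : ∀ i ∈ S, ∀ j ∈ S, i ≠ j → g i j + g j i ≤ 1) :
    ∑ i ∈ S, ∑ j ∈ S.erase i, g i j ≤ #S * (#S - 1) / 2 := by
  have hswap : ∑ i ∈ S, ∑ j ∈ S.erase i, g j i = ∑ i ∈ S, ∑ j ∈ S.erase i, g i j :=
    sum_comm' fun i j => by simp only [mem_erase]; tauto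
  have hpairs : ∑ i ∈ S, ∑ j ∈ S.erase i, (g i j + g j i) ≤ ∑ i ∈ S, ((#S : ℝ) - 1) := by
    refine sum_le_sum fun i hi => ?_
    calc ∑ j ∈ S.erase i, (g i j + g j i) ≤ ∑ j ∈ S.erase i, (1 : ℝ) :=
          sum_le_sum fun j hj => hg i hi j (mem_of_mem_erase hj) (ne_of_mem_erase hj).symm
      _ = #S - 1 := by simp [card_erase_of_mem hi, Nat.cast_pred (card_pos.2 ⟨i, hi⟩)]
  simp only [sum_add_distrib, hswap, sum_const, nsmul_eq_mul] at hpairs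
  linarith

theorem abs_add_sub_one_add_abs_sub_le_one {p q : ℝ} (hp : 0 ≤ p ∧ p ≤ 1) (hq : 0 ≤ q ∧ q ≤ 1) :
    |p + q - 1| + |q - p| ≤ 1 := by
  rcases abs_cases (p + q - 1) with ⟨h, _⟩ | ⟨h, _⟩ <;>
    rcases abs_cases (q - p) with ⟨h', _⟩ | ⟨h', _⟩ <;> linarith

theorem unitInterval_of_abs_add_abs_le_one {a b : ℝ} (h : |a| + |b| ≤ 1) :
    (0 ≤ (1 + a - b) / 2 ∧ (1 + a - b) / 2 ≤ 1) ∧ (0 ≤ (1 + a + b) / 2 ∧ (1 + a + b) / 2 ≤ 1) := by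
  have h₁ := abs_sub_le_iff.1 ((abs_sub a b).trans h)
  have h₂ := abs_le.1 ((abs_add_le a b).trans h)
  refine ⟨⟨?_, ?_⟩, ?_, ?_⟩ <;> linarith

namespace CoxeterTournamentC

variable {n : ℕ}

-- For `k ≤ n`, the sum of the `k` largest entries of `(1, 2, …, n)`.
noncomputable def topSum (n k : ℕ) : ℝ := k * n - k * (k - 1) / 2

theorem sum_range_cast_add_add_one (c m : ℕ) :
    ∑ k ∈ range m, (((c + k : ℕ) : ℝ) + 1) = topSum (c + m) m := by
  induction m with
  | zero => simp [topSum]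
  | succ m ih => rw [sum_range_succ, ih]; simp only [topSum]; push_cast; ring

theorem sum_Ici_val_add_one (c : Fin n) : ∑ j ∈ Ici c, ((j : ℝ) + 1) = topSum n (n - c) := by
  have h := sum_range_cast_add_add_one c (n - c)
  rw [Nat.add_sub_cancel' c.is_lt.le] at h
  rw [← h, ← sum_Ico_eq_sum_range (fun a => (a : ℝ) + 1), ← Fin.map_valEmbedding_Ici, sum_map]
  rfl

theorem exists_card_eq_sum_val_add_one_eq_topSum {k : ℕ} (hk : k ≤ n) :
    ∃ T : Finset (Fin n), #T = k ∧ ∑ j ∈ T, ((j : ℝ) + 1) = topSum n k := by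
  rcases Nat.eq_zero_or_pos k with rfl | hk0
  · exact ⟨∅, by simp [topSum]⟩
  refine ⟨Ici ⟨n - k, by omega⟩, ?_, ?_⟩
  · rw [Fin.card_Ici, Fin.val_mk, Nat.sub_sub_self hk]
  · rw [sum_Ici_val_add_one, Fin.val_mk, Nat.sub_sub_self hk]

-- `p.1 i j` encodes `p⁻ᵢⱼ + p⁺ᵢⱼ - 1` and `p.2 i` encodes `2 pℓᵢ - 1`; the map
-- `(p⁻, p⁺) ↦ (p⁻ + p⁺ - 1, p⁺ - p⁻)` sends `[0, 1]²` onto the unit `ℓ¹`-ball.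
-- `score` ignores the diagonal of `p.1`.
def netScores (n : ℕ) : Set ((Fin n → Fin n → ℝ) × (Fin n → ℝ)) :=
  {p | (∀ i j, |p.1 i j| + |p.1 j i| ≤ 1) ∧ ∀ i, |p.2 i| ≤ 1}

def score (n : ℕ) : ((Fin n → Fin n → ℝ) × (Fin n → ℝ)) →ₗ[ℝ] (Fin n → ℝ) where
  toFun p i := ∑ j ∈ univ.erase i, p.1 i j + p.2 i
  map_add' p q := by
    ext i
    simp only [Prod.fst_add, Prod.snd_add, Pi.add_apply, sum_add_distrib]
    ring
  map_smul' c p := by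
    ext i
    simp only [Prod.smul_fst, Prod.smul_snd, Pi.smul_apply, smul_eq_mul, RingHom.id_apply,
      ← mul_sum]
    ring

theorem score_apply (p : (Fin n → Fin n → ℝ) × (Fin n → ℝ)) (i : Fin n) :
    score n p i = ∑ j ∈ univ.erase i, p.1 i j + p.2 i := rfl

theorem convex_netScores : Convex ℝ (netScores n) := by
  rintro p ⟨hpm, hpe⟩ q ⟨hqm, hqe⟩ a b ha hb hab
  have hcomb : ∀ u v : ℝ, |a * u + b * v| ≤ a * |u| + b * |v| := fun u v => by
    simpa [abs_mul, abs_of_nonneg ha, abs_of_nonneg hb] using abs_add_le (a * u) (b * v)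
  refine ⟨fun i j => ?_, fun i => ?_⟩
  · simp only [Prod.fst_add, Prod.smul_fst, Pi.add_apply, Pi.smul_apply, smul_eq_mul]
    nlinarith [hcomb (p.1 i j) (q.1 i j), hcomb (p.1 j i) (q.1 j i), hpm i j, hqm i j]
  · simp only [Prod.snd_add, Prod.smul_snd, Pi.add_apply, Pi.smul_apply, smul_eq_mul]
    nlinarith [hcomb (p.2 i) (q.2 i), hpe i, hqe i]

theorem isCompact_netScores : IsCompact (netScores n) := by
  refine (isCompact_Icc (a := -1) (b := 1)).of_isClosed_subset ?_ fun p ⟨hm, he⟩ => ?_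
  · simp only [netScores, Set.ofPred_and, Set.ofPred_forall]
    refine .inter
        (isClosed_iInter fun i => isClosed_iInter fun j => isClosed_le ?_ continuous_const)
        (isClosed_iInter fun i => isClosed_le ?_ continuous_const) <;> fun_prop
  · have hm' : ∀ i j, |p.1 i j| ≤ 1 := fun i j => by linarith [hm i j, abs_nonneg (p.1 j i)]
    exact ⟨⟨fun i j => (abs_le.1 (hm' i j)).1, fun i => (abs_le.1 (he i)).1⟩,
      ⟨fun i j => (abs_le.1 (hm' i j)).2, fun i => (abs_le.1 (he i)).2⟩⟩

theorem isMeanScoreSeqC_iff_mem_image_score (x : Fin n → ℝ) :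
    IsMeanScoreSeqC n x ↔ x ∈ score n '' netScores n := by
  constructor
  · rintro ⟨pm, pp, pl, hpm, hpm_anti, hpp, hpp_symm, hpl, hx⟩
    refine ⟨(fun i j => if i = j then 0 else pm i j + pp i j - 1, fun i => 2 * pl i - 1),
      ⟨fun i j => ?_, fun i => ?_⟩, funext fun i => ?_⟩
    · rcases eq_or_ne i j with rfl | hij
      · simp
      simp only [if_neg hij, if_neg hij.symm, hpm_anti j i hij.symm, hpp_symm j i]
      convert abs_add_sub_one_add_abs_sub_le_one (hpm i j) (hpp i j) using 3; ring
    · rw [abs_le]; constructor <;> linarith [hpl i]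
    · rw [score_apply, hx i, ← sum_add_distrib]
      congr 1
      · exact sum_congr rfl fun j hj => by simp only [if_neg (ne_of_mem_erase hj).symm]; ring
      · ring
  · rintro ⟨p, ⟨hm, he⟩, rfl⟩
    refine ⟨fun i j => (1 + p.1 i j - p.1 j i) / 2, fun i j => (1 + p.1 i j + p.1 j i) / 2,
      fun i => (1 + p.2 i) / 2, fun i j => (unitInterval_of_abs_add_abs_le_one (hm i j)).1,
      fun i j _ => by ring, fun i j => (unitInterval_of_abs_add_abs_le_one (hm i j)).2,
      fun i j => by ring, fun i => ?_, fun i => ?_⟩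
    · constructor <;> linarith [abs_le.1 (he i)]
    · rw [score_apply, ← sum_add_distrib]
      congr 1
      · exact sum_congr rfl fun j _ => by ring
      · ring

def transitiveNetScores (r : Equiv.Perm (Fin n)) (ε : Fin n → ℝ) :
    (Fin n → Fin n → ℝ) × (Fin n → ℝ) :=
  (fun i j => if r j < r i then ε i else 0, ε)

theorem transitiveNetScores_mem (r : Equiv.Perm (Fin n)) {ε : Fin n → ℝ}
    (hε : ∀ i, |ε i| ≤ 1) : transitiveNetScores r ε ∈ netScores n := by
  refine ⟨fun i j => ?_, hε⟩
  simp only [transitiveNetScores]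
  split_ifs with hji hij
  · exact absurd (hji.trans hij) (lt_irrefl _)
  all_goals simp [hε]

theorem score_transitiveNetScores (r : Equiv.Perm (Fin n)) (ε : Fin n → ℝ) (i : Fin n) :
    score n (transitiveNetScores r ε) i = ε i * ((r i : ℝ) + 1) := by
  have hbeaten : ∑ j ∈ univ.erase i, (if r j < r i then ε i else 0)
      = ∑ b, if b < r i then ε i else 0 := by
    rw [sum_erase univ (by simp), Equiv.sum_comp r (fun b => if b < r i then ε i else 0)]
  rw [score_apply, transitiveNetScores, hbeaten, sum_ite, sum_const_zero, add_zero, sum_const,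
    filter_gt_eq_Iio, Fin.card_Iio, nsmul_eq_mul]
  ring

theorem abs_score_le {p : (Fin n → Fin n → ℝ) × (Fin n → ℝ)} (hp : p ∈ netScores n)
    {S : Finset (Fin n)} {i : Fin n} (hi : i ∈ S) :
    |score n p i| ≤ ∑ j ∈ S.erase i, |p.1 i j| + (n - #S) + 1 := by
  obtain ⟨hm, he⟩ := hp
  have hsplit :
      ∑ j ∈ univ.erase i, |p.1 i j| = ∑ j ∈ S.erase i, |p.1 i j| + ∑ j ∈ Sᶜ, |p.1 i j| := by
    linarith [sum_erase_add univ (fun j => |p.1 i j|) (mem_univ i),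
      sum_erase_add S (fun j => |p.1 i j|) hi, sum_add_sum_compl S fun j => |p.1 i j|]
  have houtside : ∑ j ∈ Sᶜ, |p.1 i j| ≤ n - #S := by
    calc ∑ j ∈ Sᶜ, |p.1 i j| ≤ #Sᶜ • (1 : ℝ) :=
          sum_le_card_nsmul _ _ _ fun j _ => by linarith [hm i j, abs_nonneg (p.1 j i)]
      _ = n - #S := by
          have hS : #S ≤ n := by simpa using card_le_univ S
          simp [card_compl, Nat.cast_sub hS]
  calc |score n p i| ≤ ∑ j ∈ univ.erase i, |p.1 i j| + |p.2 i| := by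
        grw [score_apply, abs_add_le, abs_sum_le_sum_abs]
    _ ≤ _ := by linarith [he i]

theorem sum_abs_score_le {p : (Fin n → Fin n → ℝ) × (Fin n → ℝ)} (hp : p ∈ netScores n)
    (S : Finset (Fin n)) : ∑ i ∈ S, |score n p i| ≤ topSum n #S := by
  have hinside := sum_sum_erase_le S (fun i j => |p.1 i j|) fun i _ j _ _ => hp.1 i j
  calc ∑ i ∈ S, |score n p i| ≤ ∑ i ∈ S, (∑ j ∈ S.erase i, |p.1 i j| + (n - #S) + 1) :=
        sum_le_sum fun i hi => abs_score_le hp hi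
    _ ≤ topSum n #S := by
      simp only [sum_add_distrib, sum_const, nsmul_eq_mul, topSum]
      linarith

-- `(1, 2, …, n)` is the score sequence of a transitive tournament.
theorem sum_val_add_one_le_topSum (T : Finset (Fin n)) : ∑ j ∈ T, ((j : ℝ) + 1) ≤ topSum n #T := by
  have h := sum_abs_score_le (transitiveNetScores_mem (Equiv.refl _) (ε := 1) (by simp)) T
  simp only [score_transitiveNetScores, Pi.one_apply, one_mul, Equiv.refl_apply] at h
  simpa only [abs_of_pos (Nat.cast_add_one_pos (α := ℝ) _)] using h

theorem weakSubMaj_of_mem_image_score {x : Fin n → ℝ} (hx : x ∈ score n '' netScores n) :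
    WeakSubMaj (fun i => |x i|) (fun i : Fin n => (i : ℝ) + 1) := by
  obtain ⟨p, hp, rfl⟩ := hx
  intro S
  obtain ⟨T, hT, hsum⟩ := exists_card_eq_sum_val_add_one_eq_topSum (by simpa using card_le_univ S)
  exact ⟨T, hT, hsum ▸ sum_abs_score_le hp S⟩

theorem exists_mem_netScores_sum_mul_le {x : Fin n → ℝ}
    (hx : WeakSubMaj (fun i => |x i|) (fun i : Fin n => (i : ℝ) + 1)) (l : Fin n → ℝ) :
    ∃ p ∈ netScores n, ∑ i, x i * l i ≤ ∑ i, score n p i * l i := by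
  set σ := Tuple.sort fun i => |l i|
  have hσ : Monotone fun b => |l (σ b)| := Tuple.monotone_sort fun i => |l i|
  set ε : Fin n → ℝ := fun i => SignType.sign (l i)
  have hε : ∀ i, |ε i| ≤ 1 := fun i => by simp only [ε]; cases SignType.sign (l i) <;> simp
  refine ⟨transitiveNetScores σ.symm ε, transitiveNetScores_mem _ hε, ?_⟩
  have hsuffix : ∀ c, ∑ b ∈ Ici c, |x (σ b)| ≤ ∑ b ∈ Ici c, ((b : ℝ) + 1) := by
    intro c
    obtain ⟨T, hT, hle⟩ := hx ((Ici c).map σ.toEmbedding)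
    rw [card_map, Fin.card_Ici] at hT
    rw [sum_map] at hle
    calc ∑ b ∈ Ici c, |x (σ b)| ≤ ∑ j ∈ T, ((j : ℝ) + 1) := hle
      _ ≤ topSum n #T := sum_val_add_one_le_topSum T
      _ = ∑ b ∈ Ici c, ((b : ℝ) + 1) := by rw [hT, sum_Ici_val_add_one]
  calc ∑ i, x i * l i ≤ ∑ i, |l i| * |x i| :=
        sum_le_sum fun i _ => by rw [mul_comm, ← abs_mul]; exact le_abs_self _
    _ = ∑ b, |l (σ b)| * |x (σ b)| := (Equiv.sum_comp σ _).symm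
    _ ≤ ∑ b, |l (σ b)| * ((b : ℝ) + 1) :=
        Fin.sum_mul_le_sum_mul_of_sum_Ici_le hσ (fun _ => abs_nonneg _) hsuffix
    _ = ∑ i, |l i| * ((σ.symm i : ℝ) + 1) := by
        rw [← Equiv.sum_comp σ fun i => |l i| * ((σ.symm i : ℝ) + 1)]
        simp only [Equiv.symm_apply_apply]
    _ = ∑ i, score n (transitiveNetScores σ.symm ε) i * l i := by
        simp only [score_transitiveNetScores, ε, mul_comm _ (l _), ← mul_assoc, self_mul_sign]

theorem mem_image_score_of_weakSubMaj {x : Fin n → ℝ}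
    (hx : WeakSubMaj (fun i => |x i|) (fun i : Fin n => (i : ℝ) + 1)) :
    x ∈ score n '' netScores n := by
  by_contra hx'
  obtain ⟨f, u, hfu, hux⟩ := geometric_hahn_banach_closed_point
    (convex_netScores.linear_image (score n))
    (isCompact_netScores.image (score n).continuous_of_finiteDimensional).isClosed hx'
  have hf : ∀ y, f y = ∑ i, y i * f (fun j => if i = j then 1 else 0) :=
    LinearMap.pi_apply_eq_sum_univ f.toLinearMap
  obtain ⟨p, hp, hle⟩ :=
    exists_mem_netScores_sum_mul_le hx fun i => f fun j => if i = j then 1 else 0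
  have hlt := hfu _ ⟨p, hp, rfl⟩
  rw [hf] at hlt hux
  linarith

end CoxeterTournamentC

theorem meanScoreSeqC_iff_weakSubMaj (n : ℕ) (x : Fin n → ℝ) :
    IsMeanScoreSeqC n x ↔
      WeakSubMaj (fun i => |x i|) (fun i : Fin n => (i : ℝ) + 1) := by
  rw [CoxeterTournamentC.isMeanScoreSeqC_iff_mem_image_score]
  exact ⟨CoxeterTournamentC.weakSubMaj_of_mem_image_score,
    CoxeterTournamentC.mem_image_score_of_weakSubMaj⟩
end

section
/- Every n×n real matrix A whose entrywise absolute value abs(A) is doubly sub-stochastic (all entries of abs(A) nonnegative, all row sums and column sums of abs(A) at most 1) lies in the convex hull of the set of signed permutation matrices (matrices with entries in {−1,0,1} having exactly one nonzero entry in each row and each column). -/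
open Finset

/-- The entrywise absolute value of `A` is doubly sub-stochastic:
all row sums and column sums of `|A|` are at most `1`. -/
def AbsDoublySubStochastic {n : ℕ} (A : Matrix (Fin n) (Fin n) ℝ) : Prop :=
  (∀ i, ∑ j, |A i j| ≤ 1) ∧ (∀ j, ∑ i, |A i j| ≤ 1)

/-- A signed permutation matrix: entries in `{-1, 0, 1}` with exactly one
nonzero entry in each row and in each column. -/
def IsSignedPermMatrix {n : ℕ} (M : Matrix (Fin n) (Fin n) ℝ) : Prop :=
  (∀ i j, M i j = -1 ∨ M i j = 0 ∨ M i j = 1) ∧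
  (∀ i, ∃! j, M i j ≠ 0) ∧
  (∀ j, ∃! i, M i j ≠ 0)

lemma signedPerm_of_pm {n : ℕ} (σ : Equiv.Perm (Fin n)) (t : Fin n → ℝ)
    (ht : ∀ i, t i = -1 ∨ t i = 1) :
    IsSignedPermMatrix (Matrix.of fun i j => t i * (if σ i = j then (1:ℝ) else 0)) := by
  have htne : ∀ i, t i ≠ 0 := by
    intro i; rcases ht i with h | h <;> rw [h] <;> norm_num
  refine ⟨fun i j => ?_, fun i => ?_, fun j => ?_⟩
  · by_cases h : σ i = j
    · rcases ht i with h' | h' <;> simp [h, h']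
    · simp [h]
  · refine ⟨σ i, by simp [htne i], fun j hj => ?_⟩
    by_contra hne
    exact hj (by simp [Ne.symm hne])
  · refine ⟨σ.symm j, by simp [htne (σ.symm j)], fun i hi => ?_⟩
    by_contra hne
    have : σ i ≠ j := by
      intro h; exact hne (by rw [← h]; simp)
    exact hi (by simp [this])

lemma aux_mem {n : ℕ} (σ : Equiv.Perm (Fin n)) (s : Finset (Fin n)) :
    ∀ t : Fin n → ℝ, (∀ i, |t i| ≤ 1) → (∀ i ∉ s, t i = -1 ∨ t i = 1) →
    Matrix.of (fun i j => t i * (if σ i = j then (1:ℝ) else 0)) ∈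
      convexHull ℝ {M : Matrix (Fin n) (Fin n) ℝ | IsSignedPermMatrix M} := by
  induction s using Finset.induction_on with
  | empty =>
    intro t ht h
    exact subset_convexHull ℝ _ (signedPerm_of_pm σ t (fun i => h i (by simp)))
  | @insert a s ha ih =>
    intro t ht h
    have h1 := abs_le.1 (ht a)
    set p : ℝ := (1 - t a) / 2 with hp_def
    set q : ℝ := (1 + t a) / 2 with hq_def
    have hp : 0 ≤ p := by rw [hp_def]; linarith [h1.2]
    have hq : 0 ≤ q := by rw [hq_def]; linarith [h1.1]
    have hpq : p + q = 1 := by rw [hp_def, hq_def]; ring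
    have hbound : ∀ (v : ℝ), v = -1 ∨ v = 1 → ∀ i, |Function.update t a v i| ≤ 1 := by
      intro v hv i
      by_cases hia : i = a
      · subst hia; rcases hv with h' | h' <;> simp [h']
      · rw [Function.update_of_ne hia]; exact ht i
    have hout : ∀ (v : ℝ), v = -1 ∨ v = 1 →
        ∀ i ∉ s, Function.update t a v i = -1 ∨ Function.update t a v i = 1 := by
      intro v hv i his
      by_cases hia : i = a
      · subst hia; rwa [Function.update_self]
      · rw [Function.update_of_ne hia]
        exact h i (by simp [hia, his])
    have m1 := ih (Function.update t a (-1)) (hbound _ (Or.inl rfl)) (hout _ (Or.inl rfl))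
    have m2 := ih (Function.update t a 1) (hbound _ (Or.inr rfl)) (hout _ (Or.inr rfl))
    have key : Matrix.of (fun i j => t i * (if σ i = j then (1:ℝ) else 0)) =
        p • Matrix.of (fun i j => Function.update t a (-1) i * (if σ i = j then (1:ℝ) else 0)) +
        q • Matrix.of (fun i j => Function.update t a 1 i * (if σ i = j then (1:ℝ) else 0)) := by
      ext i j
      simp only [Matrix.add_apply, Matrix.smul_apply, Matrix.of_apply, smul_eq_mul]
      by_cases hia : i = a
      · subst hia
        rw [Function.update_self, Function.update_self, hp_def, hq_def]; ring
      · rw [Function.update_of_ne hia, Function.update_of_ne hia]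
        rw [← add_mul, hpq, one_mul]
    rw [key]
    exact (convex_convexHull ℝ _) m1 m2 hp hq hpq

lemma permMatrix_entry {n : ℕ} (σ : Equiv.Perm (Fin n)) (i j : Fin n) :
    σ.permMatrix ℝ i j = if σ i = j then 1 else 0 := by
  simp [Equiv.Perm.permMatrix, PEquiv.toMatrix_apply, Equiv.toPEquiv_apply]

/-- Signed Birkhoff theorem (Mirsky, Thompson): every absolutely doubly
sub-stochastic matrix is a convex combination of signed permutation matrices. -/
theorem absDoublySubStochastic_mem_convexHull_signedPerm
    (n : ℕ) (A : Matrix (Fin n) (Fin n) ℝ) (hA : AbsDoublySubStochastic A) :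
    A ∈ convexHull ℝ {M : Matrix (Fin n) (Fin n) ℝ | IsSignedPermMatrix M} := by
  classical
  obtain ⟨hrow, hcol⟩ := hA
  set r : Fin n → ℝ := fun i => 1 - ∑ j, |A i j| with hr_def
  set c : Fin n → ℝ := fun j => 1 - ∑ i, |A i j| with hc_def
  set T : ℝ := ∑ i, r i with hT_def
  have hr0 : ∀ i, 0 ≤ r i := fun i => by
    rw [hr_def]; simpa using hrow i
  have hc0 : ∀ j, 0 ≤ c j := fun j => by
    rw [hc_def]; simpa using hcol j
  have hT0 : 0 ≤ T := Finset.sum_nonneg fun i _ => hr0 i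
  have hcT : ∑ j, c j = T := by
    rw [hT_def, hr_def, hc_def]
    simp only [Finset.sum_sub_distrib]
    rw [Finset.sum_comm]
  set S : Matrix (Fin n) (Fin n) ℝ := Matrix.of (fun i j => |A i j| + r i * c j / T)
    with hS_def
  have hSA : ∀ i j, |A i j| ≤ S i j := by
    intro i j
    have h1 : 0 ≤ r i * c j / T := div_nonneg (mul_nonneg (hr0 i) (hc0 j)) hT0
    simp only [hS_def, Matrix.of_apply]; linarith
  have hS0 : ∀ i j, 0 ≤ S i j := fun i j => le_trans (abs_nonneg _) (hSA i j)
  have hrzero : T = 0 → ∀ i, r i = 0 := by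
    intro h i
    rw [hT_def] at h
    exact (Finset.sum_eq_zero_iff_of_nonneg (fun i _ => hr0 i)).1 h i (Finset.mem_univ i)
  have hczero : T = 0 → ∀ j, c j = 0 := by
    intro h j
    exact (Finset.sum_eq_zero_iff_of_nonneg (fun j _ => hc0 j)).1 (hcT.trans h) j (Finset.mem_univ j)
  have hSrow : ∀ i, ∑ j, S i j = 1 := by
    intro i
    have heq : ∑ j, S i j = (∑ j, |A i j|) + r i * T / T := by
      simp only [hS_def, Matrix.of_apply, Finset.sum_add_distrib, ← Finset.sum_div,
        ← Finset.mul_sum, hcT]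
    by_cases hT : T = 0
    · have h2 := hrzero hT i
      have h3 : ∑ j, |A i j| = 1 := by
        have : r i = 1 - ∑ j, |A i j| := by rw [hr_def]
        linarith
      rw [heq, h2, h3]; simp
    · rw [heq, mul_div_assoc, div_self hT, mul_one]
      have : r i = 1 - ∑ j, |A i j| := by rw [hr_def]
      linarith
  have hScol : ∀ j, ∑ i, S i j = 1 := by
    intro j
    have heq : ∑ i, S i j = (∑ i, |A i j|) + T * c j / T := by
      simp only [hS_def, Matrix.of_apply, Finset.sum_add_distrib, ← Finset.sum_div]
      rw [← Finset.sum_mul, ← hT_def]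
    by_cases hT : T = 0
    · have h2 := hczero hT j
      have h3 : ∑ i, |A i j| = 1 := by
        have : c j = 1 - ∑ i, |A i j| := by rw [hc_def]
        linarith
      rw [heq, h2, h3]; simp
    · rw [heq, mul_comm T, mul_div_assoc, div_self hT, mul_one]
      have : c j = 1 - ∑ i, |A i j| := by rw [hc_def]
      linarith
  have hS : S ∈ doublyStochastic ℝ (Fin n) :=
    mem_doublyStochastic_iff_sum.2 ⟨hS0, hSrow, hScol⟩
  obtain ⟨w, hw0, hw1, hwS⟩ := exists_eq_sum_perm_of_mem_doublyStochastic hS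
  set θ : Fin n → Fin n → ℝ := fun i j => A i j / S i j with hθ_def
  have hθ1 : ∀ i j, |θ i j| ≤ 1 := by
    intro i j
    rw [hθ_def, abs_div, abs_of_nonneg (hS0 i j)]
    rcases eq_or_lt_of_le (hS0 i j) with h | h
    · rw [← h]; simp
    · rw [div_le_one h]; exact hSA i j
  have hθA : ∀ i j, θ i j * S i j = A i j := by
    intro i j
    by_cases h : S i j = 0
    · have hA0 : A i j = 0 := by
        have h1 := hSA i j
        rw [h] at h1
        exact abs_eq_zero.1 (le_antisymm h1 (abs_nonneg _))
      rw [hθ_def]; simp [h, hA0]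
    · rw [hθ_def]; exact div_mul_cancel₀ _ h
  have key : A = ∑ σ : Equiv.Perm (Fin n), w σ •
      Matrix.of (fun i j => θ i (σ i) * (if σ i = j then (1:ℝ) else 0)) := by
    ext i j
    rw [Matrix.sum_apply]
    have hterm : ∀ σ : Equiv.Perm (Fin n),
        (w σ • Matrix.of (fun i j => θ i (σ i) * (if σ i = j then (1:ℝ) else 0))) i j
        = θ i j * (w σ • σ.permMatrix ℝ) i j := by
      intro σ
      simp only [Matrix.smul_apply, Matrix.of_apply, smul_eq_mul, permMatrix_entry]
      by_cases h : σ i = j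
      · rw [h]; ring
      · simp [h]
    rw [Finset.sum_congr rfl (fun σ _ => hterm σ), ← Finset.mul_sum]
    have hsum : ∑ σ : Equiv.Perm (Fin n), (w σ • σ.permMatrix ℝ) i j = S i j := by
      rw [← Matrix.sum_apply, hwS]
    rw [hsum, hθA]
  rw [key]
  exact (convex_convexHull ℝ _).sum_mem (fun σ _ => hw0 σ) hw1
    (fun σ _ => aux_mem σ Finset.univ (fun i => θ i (σ i)) (fun i => hθ1 i (σ i))
      (fun i hi => absurd (Finset.mem_univ i) hi))
end

section
/- Let x, y ∈ ℝⁿ with y having nonnegative entries. If |x| (the entrywise absolute value of x) is weakly sub-majorized by y, then there exists an n×n matrix A whose entrywise absolute value is doubly sub-stochastic such that x = A y. -/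
open Finset

namespace AuxWSM

lemma sign_mul_abs (t : ℝ) : Real.sign t * |t| = t := by
  rcases lt_trichotomy t 0 with h | h | h
  · rw [Real.sign_of_neg h, abs_of_neg h]; ring
  · simp [h]
  · rw [Real.sign_of_pos h, abs_of_pos h]; ring

lemma abs_sign_le_one (t : ℝ) : |Real.sign t| ≤ 1 := by
  rcases Real.sign_apply_eq t with h | h | h <;> rw [h] <;> norm_num

lemma fin_le_apply' {k n : ℕ} {f : Fin k → Fin n} (hf : StrictMono f) :
    ∀ (m : ℕ) (hm : m < k), m ≤ ((f ⟨m, hm⟩ : Fin n) : ℕ) := by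
  intro m
  induction m with
  | zero => intro hm; exact Nat.zero_le _
  | succ p ih =>
      intro hm
      have hp : p < k := Nat.lt_of_succ_lt hm
      have h2 : f ⟨p, hp⟩ < f ⟨p + 1, hm⟩ := hf (by simp [Fin.lt_def])
      have h3 := ih hp
      have h4 := Fin.lt_def.mp h2
      omega

lemma fin_le_apply {k n : ℕ} {f : Fin k → Fin n} (hf : StrictMono f) (i : Fin k) :
    (i : ℕ) ≤ (f i : ℕ) := by
  have := fin_le_apply' hf i.1 i.2
  simpa using this

/-- Sum over any finset is at most the sum of the `card` first entries of an antitone vector. -/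
lemma sum_le_topk' {n : ℕ} (b : Fin n → ℝ) (hb : ∀ i j : Fin n, i ≤ j → b j ≤ b i)
    (U : Finset (Fin n)) {k : ℕ} (hUk : U.card = k) :
    ∑ i ∈ U, b i ≤ ∑ i ∈ univ.filter (fun i : Fin n => (i : ℕ) < k), b i := by
  have hkn : k ≤ n := by
    rw [← hUk]
    simpa using U.card_le_univ
  have h1 : ∑ i ∈ U, b i = ∑ i : Fin k, b (U.orderEmbOfFin hUk i) := by
    have himg : Finset.image (U.orderEmbOfFin hUk) univ = U := by
      apply Finset.coe_injective
      rw [Finset.coe_image, Finset.coe_univ, Set.image_univ, Finset.range_orderEmbOfFin]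
    have h := Finset.sum_image (f := b) (s := (univ : Finset (Fin k)))
      (g := (U.orderEmbOfFin hUk : Fin k -> Fin n))
      (fun a _ c _ h => (U.orderEmbOfFin hUk).injective h)
    rw [himg] at h
    exact h
  have h2 : ∀ i : Fin k, b (U.orderEmbOfFin hUk i) ≤ b (Fin.castLE hkn i) := by
    intro i
    apply hb
    rw [Fin.le_def]
    exact fin_le_apply (U.orderEmbOfFin hUk).strictMono i
  have h3 : ∑ i : Fin k, b (Fin.castLE hkn i)
      = ∑ i ∈ univ.filter (fun i : Fin n => (i : ℕ) < k), b i := by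
    apply Finset.sum_nbij (Fin.castLE hkn)
    · intro a _
      simp [Fin.castLE]
    · intro a _ c _ h
      exact Fin.castLE_injective hkn h
    · intro i hi
      simp only [Finset.coe_filter, Set.mem_setOf_eq, Finset.mem_univ, true_and,
        Finset.mem_coe, Finset.mem_filter] at hi
      exact ⟨⟨(i : ℕ), hi⟩, by simp, Fin.ext rfl⟩
    · intro a _
      rfl
  calc ∑ i ∈ U, b i = ∑ i : Fin k, b (U.orderEmbOfFin hUk i) := h1
    _ ≤ ∑ i : Fin k, b (Fin.castLE hkn i) := Finset.sum_le_sum (fun i _ => h2 i)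
    _ = _ := h3

/-- Product of two nonneg doubly sub-stochastic matrices is one. -/
lemma mul_dss {n : ℕ} {B T : Matrix (Fin n) (Fin n) ℝ}
    (hB0 : ∀ i j, 0 ≤ B i j) (hBr : ∀ i, ∑ j, B i j ≤ 1) (hBc : ∀ j, ∑ i, B i j ≤ 1)
    (hT0 : ∀ i j, 0 ≤ T i j) (hTr : ∀ i, ∑ j, T i j ≤ 1) (hTc : ∀ j, ∑ i, T i j ≤ 1) :
    (∀ i j, 0 ≤ (B * T) i j) ∧ (∀ i, ∑ j, (B * T) i j ≤ 1) ∧ (∀ j, ∑ i, (B * T) i j ≤ 1) := by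
  refine ⟨?_, ?_, ?_⟩
  · intro i j
    rw [Matrix.mul_apply]
    exact Finset.sum_nonneg fun p _ => mul_nonneg (hB0 _ _) (hT0 _ _)
  · intro i
    calc ∑ j, (B * T) i j = ∑ j, ∑ p, B i p * T p j := by
          simp [Matrix.mul_apply]
      _ = ∑ p, B i p * ∑ j, T p j := by
          rw [Finset.sum_comm]; simp [Finset.mul_sum]
      _ ≤ ∑ p, B i p * 1 := by
          exact Finset.sum_le_sum fun p _ =>
            mul_le_mul_of_nonneg_left (hTr p) (hB0 _ _)
      _ ≤ 1 := by simpa using hBr i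
  · intro j
    calc ∑ i, (B * T) i j = ∑ i, ∑ p, B i p * T p j := by
          simp [Matrix.mul_apply]
      _ = ∑ p, (∑ i, B i p) * T p j := by
          rw [Finset.sum_comm]; simp [Finset.sum_mul]
      _ ≤ ∑ p, 1 * T p j := by
          exact Finset.sum_le_sum fun p _ =>
            mul_le_mul_of_nonneg_right (hBc p) (hT0 _ _)
      _ ≤ 1 := by simpa using hTc j

/-- Diagonal case: if `0 ≤ c ≤ b` entrywise, then `c = D b` with diagonal sub-stochastic `D`. -/
lemma diag_case {n : ℕ} (c b : Fin n → ℝ) (hc0 : ∀ i, 0 ≤ c i) (hle : ∀ i, c i ≤ b i) :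
    ∃ B : Matrix (Fin n) (Fin n) ℝ, (∀ i j, 0 ≤ B i j) ∧ (∀ i, ∑ j, B i j ≤ 1) ∧
      (∀ j, ∑ i, B i j ≤ 1) ∧ c = B.mulVec b := by
  classical
  set d : Fin n → ℝ := fun i => if b i = 0 then 0 else c i / b i with hd
  have hd0 : ∀ i, 0 ≤ d i := by
    intro i
    rw [hd]
    dsimp only
    by_cases h : b i = 0
    · rw [if_pos h]
    · rw [if_neg h]
      exact div_nonneg (hc0 i) ((hc0 i).trans (hle i))
  have hd1 : ∀ i, d i ≤ 1 := by
    intro i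
    rw [hd]
    dsimp only
    by_cases h : b i = 0
    · rw [if_pos h]; norm_num
    · rw [if_neg h]
      have hb : 0 < b i := lt_of_le_of_ne ((hc0 i).trans (hle i)) (Ne.symm h)
      exact (div_le_one hb).mpr (hle i)
  refine ⟨Matrix.diagonal d, ?_, ?_, ?_, ?_⟩
  · intro i j
    rw [Matrix.diagonal_apply]
    by_cases h : i = j
    · rw [if_pos h]; exact hd0 i
    · rw [if_neg h]
  · intro i
    have h : ∑ j, Matrix.diagonal d i j = d i := by
      simp [Matrix.diagonal_apply]
    rw [h]; exact hd1 i
  · intro j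
    have h : ∑ i, Matrix.diagonal d i j = d j := by
      simp [Matrix.diagonal_apply]
    rw [h]; exact hd1 j
  · funext i
    rw [Matrix.mulVec_diagonal]
    rw [hd]
    dsimp only
    by_cases h : b i = 0
    · rw [if_pos h]
      have hci : c i = 0 := le_antisymm (h ▸ hle i) (hc0 i)
      rw [hci, zero_mul]
    · rw [if_neg h, div_mul_cancel₀ _ h]

/-- Core lemma: HLP-style induction with T-transforms, sub-stochastic version. -/
lemma core {n : ℕ} (N : ℕ) : ∀ (c b : Fin n → ℝ),
    (univ.filter (fun i => c i ≠ b i)).card ≤ N →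
    (∀ i j : Fin n, i ≤ j → c j ≤ c i) → (∀ i, 0 ≤ c i) → (∀ i, 0 ≤ b i) →
    (∀ m : ℕ, ∑ i ∈ univ.filter (fun i : Fin n => (i : ℕ) < m), c i
      ≤ ∑ i ∈ univ.filter (fun i : Fin n => (i : ℕ) < m), b i) →
    ∃ B : Matrix (Fin n) (Fin n) ℝ, (∀ i j, 0 ≤ B i j) ∧ (∀ i, ∑ j, B i j ≤ 1) ∧
      (∀ j, ∑ i, B i j ≤ 1) ∧ c = B.mulVec b := by
  induction N with
  | zero =>
      intro c b hcard hc hc0 hb0 hpre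
      have hcb : c = b := by
        funext i
        by_contra h
        have : i ∈ univ.filter (fun i => c i ≠ b i) := by simp [h]
        have := Finset.card_pos.mpr ⟨i, this⟩
        omega
      exact diag_case c b hc0 (fun i => le_of_eq (congrFun hcb i))
  | succ N ih =>
      intro c b hcard hc hc0 hb0 hpre
      by_cases hle : ∀ i, c i ≤ b i
      · exact diag_case c b hc0 hle
      · push_neg at hle
        obtain ⟨k0, hk0⟩ := hle
        have hKne : (univ.filter (fun i => b i < c i)).Nonempty := ⟨k0, by simp [hk0]⟩
        set k : Fin n := (univ.filter (fun i => b i < c i)).min' hKne with hkdef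
        have hkK : b k < c k := by
          rw [hkdef]
          exact (Finset.mem_filter.mp (Finset.min'_mem _ hKne)).2
        have hkne' : c k ≠ b k := Ne.symm (ne_of_lt hkK)
        have hkmemD : k ∈ univ.filter (fun i => c i ≠ b i) :=
          Finset.mem_filter.mpr ⟨Finset.mem_univ _, hkne'⟩
        have hDne : (univ.filter (fun i => c i ≠ b i)).Nonempty := ⟨k, hkmemD⟩
        set j : Fin n := (univ.filter (fun i => c i ≠ b i)).min' hDne with hjdef
        have hjD : c j ≠ b j := by
          rw [hjdef]
          exact (Finset.mem_filter.mp (Finset.min'_mem _ hDne)).2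
        have hlow : ∀ i : Fin n, i < j → c i = b i := by
          intro i hi
          by_contra h
          have hiD : i ∈ univ.filter (fun i => c i ≠ b i) := by simp [h]
          have h2 : j ≤ i := by rw [hjdef]; exact Finset.min'_le _ i hiD
          exact absurd h2 (not_le.mpr hi)
        have hik : ∀ i : Fin n, i < k → c i ≤ b i := by
          intro i hi
          by_contra h
          push_neg at h
          have hiK : i ∈ univ.filter (fun i => b i < c i) := by simp [h]
          have h2 : k ≤ i := by rw [hkdef]; exact Finset.min'_le _ i hiK
          exact absurd h2 (not_le.mpr hi)
        -- c j < b j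
        have hcjbj : c j < b j := by
          have hsucc : ∀ v : Fin n → ℝ,
              ∑ i ∈ univ.filter (fun i : Fin n => (i : ℕ) < (j : ℕ) + 1), v i
              = (∑ i ∈ univ.filter (fun i : Fin n => (i : ℕ) < (j : ℕ)), v i) + v j := by
            intro v
            have hins : univ.filter (fun i : Fin n => (i : ℕ) < (j : ℕ) + 1)
                = insert j (univ.filter (fun i : Fin n => (i : ℕ) < (j : ℕ))) := by
              ext i
              simp only [Finset.mem_filter, Finset.mem_univ, true_and, Finset.mem_insert]
              constructor
              · intro h
                rcases Nat.lt_succ_iff_lt_or_eq.mp h with h | h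
                · exact Or.inr h
                · exact Or.inl (Fin.ext h)
              · rintro (rfl | h)
                · exact Nat.lt_succ_self _
                · exact Nat.lt_succ_of_lt h
            rw [hins, Finset.sum_insert (by simp)]
            ring
          have heq : ∑ i ∈ univ.filter (fun i : Fin n => (i : ℕ) < (j : ℕ)), c i
              = ∑ i ∈ univ.filter (fun i : Fin n => (i : ℕ) < (j : ℕ)), b i := by
            apply Finset.sum_congr rfl
            intro i hi
            exact hlow i ((Finset.mem_filter.mp hi).2)
          have h1 := hpre ((j : ℕ) + 1)
          rw [hsucc c, hsucc b, heq] at h1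
          have : c j ≤ b j := by linarith
          exact lt_of_le_of_ne this hjD
        have hjk : j < k := by
          have hle' : j ≤ k := by
            rw [hjdef]
            exact Finset.min'_le _ k hkmemD
          cases lt_or_eq_of_le hle' with
          | inl h => exact h
          | inr h => exact absurd (h ▸ hcjbj) (not_lt.mpr (le_of_lt hkK))
        have hcjck : c k ≤ c j := hc j k (le_of_lt hjk)
        have hjkne : j ≠ k := ne_of_lt hjk
        set δ : ℝ := min (b j - c j) (c k - b k) with hδdef
        have hδpos : 0 < δ := lt_min (by linarith) (by linarith)
        have hbkbj : b k < b j := by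
          have : b k < c k := hkK
          linarith
        have hδ1 : δ ≤ b j - c j := min_le_left _ _
        have hδ2 : δ ≤ c k - b k := min_le_right _ _
        have hδ3 : δ ≤ b j - b k := by
          have : b j - c j ≤ b j - b k := by linarith
          linarith
        set l : ℝ := δ / (b j - b k) with hldef
        have hbne : b j - b k ≠ 0 := by linarith
        have hl0 : 0 ≤ l := div_nonneg (le_of_lt hδpos) (by linarith)
        have hl1 : l ≤ 1 := (div_le_one (by linarith)).mpr hδ3
        have hlmul : l * (b j - b k) = δ := div_mul_cancel₀ _ hbne
        set s : Equiv.Perm (Fin n) := Equiv.swap j k with hsdef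
        set b' : Fin n → ℝ :=
          fun i => b i + (if i = j then -δ else 0) + (if i = k then δ else 0) with hb'def
        have hb'j : b' j = b j - δ := by simp [hb'def, hjkne]; ring
        have hb'k : b' k = b k + δ := by simp [hb'def, Ne.symm hjkne]
        have hb'i : ∀ i : Fin n, i ≠ j → i ≠ k → b' i = b i := by
          intro i h1 h2; simp [hb'def, h1, h2]
        set T : Matrix (Fin n) (Fin n) ℝ :=
          fun p q => (1 - l) * (if p = q then 1 else 0) + l * (if s p = q then 1 else 0)
          with hTdef
        have hT0 : ∀ p q, 0 ≤ T p q := by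
          intro p q
          apply add_nonneg
          · apply mul_nonneg (by linarith)
            split <;> norm_num
          · apply mul_nonneg hl0
            split <;> norm_num
        have hTr : ∀ p, ∑ q, T p q = 1 := by
          intro p
          rw [hTdef]
          simp only
          rw [Finset.sum_add_distrib, ← Finset.mul_sum, ← Finset.mul_sum]
          rw [Finset.sum_ite_eq univ p (fun _ => (1:ℝ)), Finset.sum_ite_eq univ (s p) (fun _ => (1:ℝ))]
          simp
        have hTc : ∀ q, ∑ p, T p q = 1 := by
          intro q
          rw [hTdef]
          simp only
          rw [Finset.sum_add_distrib, ← Finset.mul_sum, ← Finset.mul_sum]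
          have h1 : ∑ p : Fin n, (if p = q then (1:ℝ) else 0) = 1 := by
            rw [Finset.sum_ite_eq' univ q (fun _ => (1:ℝ))]; simp
          have h2 : ∑ p : Fin n, (if s p = q then (1:ℝ) else 0) = 1 := by
            have : ∀ p : Fin n, (if s p = q then (1:ℝ) else 0) = (if p = s.symm q then (1:ℝ) else 0) := by
              intro p
              congr 1
              simp [Equiv.apply_eq_iff_eq_symm_apply]
            rw [Finset.sum_congr rfl (fun p _ => this p)]
            rw [Finset.sum_ite_eq' univ (s.symm q) (fun _ => (1:ℝ))]
            simp
          rw [h1, h2]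
          ring
        have hTb : T.mulVec b = b' := by
          funext p
          rw [Matrix.mulVec, hTdef]
          simp only [dotProduct]
          have expand : ∀ q : Fin n,
              ((1 - l) * (if p = q then (1:ℝ) else 0) + l * (if s p = q then 1 else 0)) * b q
              = (if p = q then (1 - l) * b q else 0) + (if s p = q then l * b q else 0) := by
            intro q
            split <;> split <;> ring
          rw [Finset.sum_congr rfl (fun q _ => expand q), Finset.sum_add_distrib]
          rw [Finset.sum_ite_eq univ p (fun q => (1 - l) * b q),
            Finset.sum_ite_eq univ (s p) (fun q => l * b q)]
          simp only [Finset.mem_univ, if_true]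
          by_cases hpj : p = j
          · subst hpj
            have hsw : s j = k := Equiv.swap_apply_left j k
            rw [hsw, hb'j]
            nlinarith [hlmul]
          · by_cases hpk : p = k
            · subst hpk
              have hsw : s k = j := Equiv.swap_apply_right j k
              rw [hsw, hb'k]
              nlinarith [hlmul]
            · have : s p = p := Equiv.swap_apply_of_ne_of_ne hpj hpk
              rw [this, hb'i p hpj hpk]
              ring
        -- b' nonneg
        have hb'0 : ∀ i, 0 ≤ b' i := by
          intro i
          by_cases h1 : i = j
          · subst h1; rw [hb'j]
            have := hc0 j
            linarith
          · by_cases h2 : i = k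
            · subst h2; rw [hb'k]
              have := hb0 k
              linarith
            · rw [hb'i i h1 h2]; exact hb0 i
        -- prefix sums for b'
        have hpre' : ∀ m : ℕ, ∑ i ∈ univ.filter (fun i : Fin n => (i : ℕ) < m), c i
            ≤ ∑ i ∈ univ.filter (fun i : Fin n => (i : ℕ) < m), b' i := by
          intro m
          have hsplit : ∑ i ∈ univ.filter (fun i : Fin n => (i : ℕ) < m), b' i
              = (∑ i ∈ univ.filter (fun i : Fin n => (i : ℕ) < m), b i)
                + (if j ∈ univ.filter (fun i : Fin n => (i : ℕ) < m) then -δ else 0)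
                + (if k ∈ univ.filter (fun i : Fin n => (i : ℕ) < m) then δ else 0) := by
            rw [hb'def]
            dsimp only
            rw [Finset.sum_add_distrib, Finset.sum_add_distrib]
            rw [Finset.sum_ite_eq' _ j (fun _ => -δ), Finset.sum_ite_eq' _ k (fun _ => δ)]
          have hjmem : j ∈ univ.filter (fun i : Fin n => (i : ℕ) < m) ↔ (j : ℕ) < m := by simp
          have hkmem : k ∈ univ.filter (fun i : Fin n => (i : ℕ) < m) ↔ (k : ℕ) < m := by simp
          by_cases hkm : (k : ℕ) < m
          · have hjm : (j : ℕ) < m := lt_trans (Fin.lt_def.mp hjk) hkm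
            rw [hsplit, if_pos (hjmem.mpr hjm), if_pos (hkmem.mpr hkm)]
            have := hpre m
            linarith
          · by_cases hjm : (j : ℕ) < m
            · rw [hsplit, if_pos (hjmem.mpr hjm), if_neg (fun h => hkm (hkmem.mp h))]
              have hgap : δ ≤ ∑ i ∈ univ.filter (fun i : Fin n => (i : ℕ) < m), (b i - c i) := by
                have hterm : b j - c j ≤ ∑ i ∈ univ.filter (fun i : Fin n => (i : ℕ) < m), (b i - c i) := by
                  refine Finset.single_le_sum (f := fun i => b i - c i) ?_ ?_
                  · intro i hi
                    have him : (i : ℕ) < m := (Finset.mem_filter.mp hi).2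
                    have hikk : i < k := by
                      rw [Fin.lt_def]
                      omega
                    have := hik i hikk
                    show (0:ℝ) ≤ b i - c i
                    linarith
                  · exact hjmem.mpr hjm
                linarith
              rw [Finset.sum_sub_distrib] at hgap
              linarith
            · rw [hsplit, if_neg (fun h => hjm (hjmem.mp h)), if_neg (fun h => hkm (hkmem.mp h))]
              have := hpre m
              linarith
        -- cardinality decreases
        have hcard' : (univ.filter (fun i => c i ≠ b' i)).card ≤ N := by
          rcases le_total (b j - c j) (c k - b k) with hmin | hmin
          · have hδeq : δ = b j - c j := min_eq_left hmin
            have hfix : b' j = c j := by rw [hb'j, hδeq]; ring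
            have hsub : univ.filter (fun i => c i ≠ b' i) ⊆ (univ.filter (fun i => c i ≠ b i)).erase j := by
              intro i hi
              have hi' : c i ≠ b' i := by simpa using hi
              rw [Finset.mem_erase]
              constructor
              · intro h; subst h; exact hi' hfix.symm
              · by_cases h1 : i = j
                · subst h1; exact absurd hfix.symm hi'
                · by_cases h2 : i = k
                  · subst h2; exact hkmemD
                  · simp only [Finset.mem_filter, Finset.mem_univ, true_and]
                    rw [hb'i i h1 h2] at hi'
                    exact hi'
            have h1 := Finset.card_le_card hsub
            have hjmemD : j ∈ univ.filter (fun i => c i ≠ b i) :=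
              Finset.mem_filter.mpr ⟨Finset.mem_univ _, hjD⟩
            have h2 : ((univ.filter (fun i => c i ≠ b i)).erase j).card = (univ.filter (fun i => c i ≠ b i)).card - 1 :=
              Finset.card_erase_of_mem hjmemD
            have h3 : (univ.filter (fun i => c i ≠ b i)).card ≤ N + 1 := hcard
            omega
          · have hδeq : δ = c k - b k := min_eq_right hmin
            have hfix : b' k = c k := by rw [hb'k, hδeq]; ring
            have hsub : univ.filter (fun i => c i ≠ b' i) ⊆ (univ.filter (fun i => c i ≠ b i)).erase k := by
              intro i hi
              have hi' : c i ≠ b' i := by simpa using hi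
              rw [Finset.mem_erase]
              constructor
              · intro h; subst h; exact hi' hfix.symm
              · by_cases h1 : i = j
                · subst h1; exact Finset.mem_filter.mpr ⟨Finset.mem_univ _, hjD⟩
                · by_cases h2 : i = k
                  · subst h2; exact absurd hfix.symm hi'
                  · simp only [Finset.mem_filter, Finset.mem_univ, true_and]
                    rw [hb'i i h1 h2] at hi'
                    exact hi'
            have h1 := Finset.card_le_card hsub
            have h2 : ((univ.filter (fun i => c i ≠ b i)).erase k).card = (univ.filter (fun i => c i ≠ b i)).card - 1 :=
              Finset.card_erase_of_mem hkmemD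
            have h3 : (univ.filter (fun i => c i ≠ b i)).card ≤ N + 1 := hcard
            omega
        obtain ⟨B', hB'0, hB'r, hB'c, hB'eq⟩ := ih c b' hcard' hc hc0 hb'0 hpre'
        obtain ⟨hP0, hPr, hPc⟩ := mul_dss hB'0 hB'r hB'c hT0
          (fun i => le_of_eq (hTr i)) (fun q => le_of_eq (hTc q))
        refine ⟨B' * T, hP0, hPr, hPc, ?_⟩
        rw [← Matrix.mulVec_mulVec, hTb, ← hB'eq]

end AuxWSM

theorem exists_absDoublySubStochastic_of_weakSubMaj
    (n : ℕ) (x y : Fin n → ℝ) (hy : ∀ i, 0 ≤ y i)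
    (hmaj : WeakSubMaj (fun i => |x i|) y) :
    ∃ A : Matrix (Fin n) (Fin n) ℝ, AbsDoublySubStochastic A ∧ x = A.mulVec y := by
  classical
  set σ : Equiv.Perm (Fin n) := Tuple.sort (fun i => -|x i|) with hσdef
  set τ : Equiv.Perm (Fin n) := Tuple.sort (fun i => -(y i)) with hτdef
  set c : Fin n → ℝ := fun i => |x (σ i)| with hcdef
  set b : Fin n → ℝ := fun i => y (τ i) with hbdef
  have hc : ∀ i j : Fin n, i ≤ j → c j ≤ c i := by
    intro i j hij
    have := Tuple.monotone_sort (fun i => -|x i|) hij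
    simp only [Function.comp_apply] at this
    rw [hcdef]
    dsimp only
    linarith
  have hbmono : ∀ i j : Fin n, i ≤ j → b j ≤ b i := by
    intro i j hij
    have := Tuple.monotone_sort (fun i => -(y i)) hij
    simp only [Function.comp_apply] at this
    rw [hbdef]
    dsimp only
    linarith
  have hc0 : ∀ i, 0 ≤ c i := fun i => abs_nonneg _
  have hb0 : ∀ i, 0 ≤ b i := fun i => hy _
  have hpre : ∀ m : ℕ, ∑ i ∈ univ.filter (fun i : Fin n => (i : ℕ) < m), c i
      ≤ ∑ i ∈ univ.filter (fun i : Fin n => (i : ℕ) < m), b i := by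
    intro m
    set F : Finset (Fin n) := univ.filter (fun i : Fin n => (i : ℕ) < m) with hF
    set S : Finset (Fin n) := F.image σ with hS
    have hSsum : ∑ i ∈ S, |x i| = ∑ i ∈ F, c i := by
      rw [hS, Finset.sum_image (fun a _ c _ h => σ.injective h)]
    have hScard : S.card = F.card := Finset.card_image_of_injective _ σ.injective
    obtain ⟨T, hTcard, hTle⟩ := hmaj S
    set U : Finset (Fin n) := T.image τ.symm with hU
    have hUsum : ∑ i ∈ U, b i = ∑ t ∈ T, y t := by
      rw [hU, Finset.sum_image (fun a _ c _ h => τ.symm.injective h)]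
      apply Finset.sum_congr rfl
      intro t _
      rw [hbdef]
      simp
    have hUcard : U.card = F.card := by
      rw [hU, Finset.card_image_of_injective _ τ.symm.injective, hTcard, hScard]
    have htop := AuxWSM.sum_le_topk' b hbmono U rfl
    have hFcard_le : F.card ≤ m := by
      have : ∀ i ∈ F, (i : ℕ) ∈ Finset.range m := by
        intro i hi
        simp only [Finset.mem_range]
        exact (Finset.mem_filter.mp hi).2
      calc F.card ≤ (Finset.range m).card := Finset.card_le_card_of_injOn (fun i => (i : ℕ))
            this (fun a _ b _ h => Fin.ext h)
        _ = m := Finset.card_range m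
    have hsubset : univ.filter (fun i : Fin n => (i : ℕ) < U.card) ⊆ F := by
      intro i hi
      have : (i : ℕ) < U.card := (Finset.mem_filter.mp hi).2
      rw [hF]
      simp only [Finset.mem_filter, Finset.mem_univ, true_and]
      omega
    have hmono : ∑ i ∈ univ.filter (fun i : Fin n => (i : ℕ) < U.card), b i ≤ ∑ i ∈ F, b i :=
      Finset.sum_le_sum_of_subset_of_nonneg hsubset (fun i _ _ => hb0 i)
    calc ∑ i ∈ F, c i = ∑ i ∈ S, |x i| := hSsum.symm
      _ ≤ ∑ t ∈ T, y t := hTle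
      _ = ∑ i ∈ U, b i := hUsum.symm
      _ ≤ ∑ i ∈ univ.filter (fun i : Fin n => (i : ℕ) < U.card), b i := htop
      _ ≤ ∑ i ∈ F, b i := hmono
  obtain ⟨B, hB0, hBr, hBc, hBeq⟩ :=
    AuxWSM.core (univ.filter (fun i => c i ≠ b i)).card c b (le_refl _) hc hc0 hb0 hpre
  set A : Matrix (Fin n) (Fin n) ℝ :=
    fun i j => Real.sign (x i) * B (σ.symm i) (τ.symm j) with hA
  have habsA : ∀ i j, |A i j| ≤ B (σ.symm i) (τ.symm j) := by
    intro i j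
    rw [hA]
    dsimp only
    rw [abs_mul, abs_of_nonneg (hB0 _ _)]
    calc |Real.sign (x i)| * B (σ.symm i) (τ.symm j)
        ≤ 1 * B (σ.symm i) (τ.symm j) :=
          mul_le_mul_of_nonneg_right (AuxWSM.abs_sign_le_one _) (hB0 _ _)
      _ = _ := one_mul _
  refine ⟨A, ⟨?_, ?_⟩, ?_⟩
  · intro i
    calc ∑ j, |A i j| ≤ ∑ j, B (σ.symm i) (τ.symm j) :=
          Finset.sum_le_sum (fun j _ => habsA i j)
      _ = ∑ j, B (σ.symm i) j := Fintype.sum_equiv τ.symm _ _ (fun j => rfl)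
      _ ≤ 1 := hBr _
  · intro j
    calc ∑ i, |A i j| ≤ ∑ i, B (σ.symm i) (τ.symm j) :=
          Finset.sum_le_sum (fun i _ => habsA i j)
      _ = ∑ i, B i (τ.symm j) := Fintype.sum_equiv σ.symm _ _ (fun i => rfl)
      _ ≤ 1 := hBc _
  · funext i
    show x i = ∑ j : Fin n, A i j * y j
    have hrow : ∑ j : Fin n, B (σ.symm i) j * y (τ j) = c (σ.symm i) := by
      have hmv := congrFun hBeq (σ.symm i)
      rw [Matrix.mulVec, dotProduct] at hmv
      rw [hbdef] at hmv
      exact hmv.symm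
    have hreind : ∑ j : Fin n, A i j * y j
        = ∑ j : Fin n, Real.sign (x i) * (B (σ.symm i) j * y (τ j)) := by
      apply Fintype.sum_equiv τ.symm
      intro q
      rw [hA]
      dsimp only
      rw [Equiv.apply_symm_apply]
      ring
    calc x i = Real.sign (x i) * |x i| := (AuxWSM.sign_mul_abs _).symm
      _ = Real.sign (x i) * c (σ.symm i) := by
          rw [hcdef]
          dsimp only
          rw [Equiv.apply_symm_apply]
      _ = ∑ j : Fin n, A i j * y j := by
          rw [hreind, ← Finset.mul_sum, hrow]
end

section
/- Let x, y ∈ ℝⁿ with y having nonnegative entries. If x = A y for some matrix A whose entrywise absolute value is doubly sub-stochastic, then |x| is weakly sub-majorized by y. -/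
open Finset

lemma key_weighted_le_topk {n k : ℕ} (hk : k ≤ n) (y c : Fin n → ℝ) (hy : ∀ i, 0 ≤ y i)
    (hc0 : ∀ j, 0 ≤ c j) (hc1 : ∀ j, c j ≤ 1) (hcs : ∑ j, c j ≤ (k : ℝ)) :
    ∃ T : Finset (Fin n), T.card = k ∧ ∑ j, c j * y j ≤ ∑ j ∈ T, y j := by
  obtain ⟨T, hTmem, hTmax⟩ := Finset.exists_max_image
      ((univ : Finset (Fin n)).powersetCard k) (fun T => ∑ j ∈ T, y j)
      ((Finset.powersetCard_nonempty.mpr (by simpa using hk)))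
  have hTcard : T.card = k := (Finset.mem_powersetCard_univ).mp hTmem
  refine ⟨T, hTcard, ?_⟩
  rcases Nat.eq_zero_or_pos k with hk0 | hkpos
  · subst hk0
    have hzero : ∑ j, c j = 0 :=
      le_antisymm (by simpa using hcs) (Finset.sum_nonneg fun j _ => hc0 j)
    have hceq := (Finset.sum_eq_zero_iff_of_nonneg (fun j _ => hc0 j)).mp hzero
    have : ∑ j, c j * y j = 0 :=
      Finset.sum_eq_zero fun j hj => by rw [hceq j hj, zero_mul]
    rw [this]
    exact Finset.sum_nonneg fun j _ => hy j
  · have hTne : T.Nonempty := Finset.card_pos.mp (hTcard ▸ hkpos)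
    set t := T.inf' hTne y with ht
    have ht0 : 0 ≤ t := Finset.le_inf' hTne y fun i _ => hy i
    have hswap : ∀ j, j ∉ T → ∀ i ∈ T, y j ≤ y i := by
      intro j hj i hi
      have hjne : j ∉ T.erase i := fun h => hj (Finset.mem_of_mem_erase h)
      have hT'card : (insert j (T.erase i)).card = k := by
        rw [Finset.card_insert_of_notMem hjne, Finset.card_erase_of_mem hi, hTcard]
        omega
      have hle := hTmax (insert j (T.erase i)) ((Finset.mem_powersetCard_univ).mpr hT'card)
      rw [Finset.sum_insert hjne, Finset.sum_erase_eq_sub hi] at hle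

      linarith
    have hjt : ∀ j, j ∉ T → y j ≤ t :=
      fun j hj => Finset.le_inf' hTne y fun i hi => hswap j hj i hi
    have htle : ∀ i ∈ T, t ≤ y i := fun i hi => Finset.inf'_le y hi
    have h1 : ∑ j ∈ T, c j * y j ≤ ∑ j ∈ T, (y j + (c j - 1) * t) := by
      refine Finset.sum_le_sum fun j hj => ?_
      have := htle j hj
      nlinarith [hc1 j, hc0 j]
    have h2 : ∑ j ∈ Tᶜ, c j * y j ≤ ∑ j ∈ Tᶜ, c j * t := by
      refine Finset.sum_le_sum fun j hj => ?_
      exact mul_le_mul_of_nonneg_left (hjt j (Finset.mem_compl.mp hj)) (hc0 j)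
    have hsplit : ∑ j, c j * y j = ∑ j ∈ T, c j * y j + ∑ j ∈ Tᶜ, c j * y j :=
      (Finset.sum_add_sum_compl T _).symm
    have hcsplit : ∑ j ∈ T, c j + ∑ j ∈ Tᶜ, c j = ∑ j, c j :=
      Finset.sum_add_sum_compl T _
    have e1 : ∑ j ∈ T, (y j + (c j - 1) * t) =
        ∑ j ∈ T, y j + ((∑ j ∈ T, c j) * t - (k : ℝ) * t) := by
      rw [Finset.sum_add_distrib, ← Finset.sum_mul, Finset.sum_sub_distrib,
        Finset.sum_const, hTcard, nsmul_eq_mul, mul_one, sub_mul]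
    have e2 : ∑ j ∈ Tᶜ, c j * t = (∑ j ∈ Tᶜ, c j) * t := (Finset.sum_mul _ _ _).symm
    have hneg : (∑ j, c j - (k : ℝ)) * t ≤ 0 :=
      mul_nonpos_of_nonpos_of_nonneg (by linarith) ht0
    nlinarith [h1, h2]

theorem weakSubMaj_of_absDoublySubStochastic
    (n : ℕ) (x y : Fin n → ℝ) (hy : ∀ i, 0 ≤ y i)
    (A : Matrix (Fin n) (Fin n) ℝ) (hA : AbsDoublySubStochastic A)
    (hxy : x = A.mulVec y) :
    WeakSubMaj (fun i => |x i|) y := by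
  intro S
  set k := S.card with hkdef
  have hk : k ≤ n := le_trans (Finset.card_le_univ S) (by simp)
  set c : Fin n → ℝ := fun j => ∑ i ∈ S, |A i j| with hc
  have hc0 : ∀ j, 0 ≤ c j := fun j => Finset.sum_nonneg fun i _ => abs_nonneg _
  have hc1 : ∀ j, c j ≤ 1 := fun j =>
    le_trans (Finset.sum_le_sum_of_subset_of_nonneg (Finset.subset_univ S)
      (fun i _ _ => abs_nonneg _)) (hA.2 j)
  have hcs : ∑ j, c j ≤ (k : ℝ) := by
    have : ∑ j, c j = ∑ i ∈ S, ∑ j, |A i j| := Finset.sum_comm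
    rw [this]
    calc ∑ i ∈ S, ∑ j, |A i j| ≤ ∑ i ∈ S, (1 : ℝ) :=
          Finset.sum_le_sum fun i _ => hA.1 i
      _ = (k : ℝ) := by simp [hkdef]
  obtain ⟨T, hTc, hTle⟩ := key_weighted_le_topk hk y c hy hc0 hc1 hcs
  refine ⟨T, hTc, le_trans ?_ hTle⟩
  calc ∑ i ∈ S, |x i| = ∑ i ∈ S, |∑ j, A i j * y j| := by
        subst hxy; simp [Matrix.mulVec, dotProduct]
    _ ≤ ∑ i ∈ S, ∑ j, |A i j| * y j := by
        refine Finset.sum_le_sum fun i _ => ?_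
        refine le_trans (Finset.abs_sum_le_sum_abs _ _) (le_of_eq ?_)
        exact Finset.sum_congr rfl fun j _ => by rw [abs_mul, abs_of_nonneg (hy j)]
    _ = ∑ j, c j * y j := by
        rw [Finset.sum_comm]
        exact Finset.sum_congr rfl fun j _ => by rw [hc, Finset.sum_mul]
end

section
/- For x ∈ ℝⁿ with entries sorted so that comparisons are on |x_i|, and δ ∈ {0, 1/2, 1}: the vector |x| is weakly sub-majorized by (δ, 1+δ, …, n−1+δ) if and only if for every ℓ ∈ {δ, 1+δ, …, n−1+δ} one has Σ_{i=1}^{n} max(|x_i| − ℓ, 0) ≤ C(n − (ℓ − δ), 2), where C(m,2) = m(m−1)/2. -/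
/-!
Both conditions compare the excess `t ↦ ∑ max (· - t) 0` of the two vectors over a threshold; for
`(δ, 1 + δ, …, n - 1 + δ)` at `t = j + δ` it is `C(n - j, 2)`. For any set `s` and threshold `t`,
`∑_{i ∈ s} f i ≤ #s * t + ∑_i max (f i - t) 0`, with equality when `f ≥ t` on `s` and `f ≤ t` off
`s`. Equality for the entries of `|x|` above `t` gives the forward direction; equality for the top
`k` entries of `(i + δ)_i`, with `t = n - k + δ`, gives the converse.
-/

open Finset

section ExcessOverThreshold

variable {ι : Type*} [Fintype ι]

theorem sum_le_card_mul_add_sum_max_sub (f : ι → ℝ) (s : Finset ι) (t : ℝ) :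
    ∑ i ∈ s, f i ≤ (#s : ℝ) * t + ∑ i, max (f i - t) 0 :=
  calc ∑ i ∈ s, f i ≤ ∑ i ∈ s, (t + max (f i - t) 0) :=
        sum_le_sum fun i _ => by linarith [le_max_left (f i - t) 0]
    _ = (#s : ℝ) * t + ∑ i ∈ s, max (f i - t) 0 := by
        rw [sum_add_distrib, sum_const, nsmul_eq_mul]
    _ ≤ (#s : ℝ) * t + ∑ i, max (f i - t) 0 :=
        add_le_add_right (sum_le_sum_of_subset_of_nonneg (subset_univ s)
          fun i _ _ => le_max_right (f i - t) 0) _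

theorem sum_eq_card_mul_add_sum_max_sub {f : ι → ℝ} {s : Finset ι} {t : ℝ}
    (hs : ∀ i ∈ s, t ≤ f i) (hsc : ∀ i ∉ s, f i ≤ t) :
    ∑ i ∈ s, f i = (#s : ℝ) * t + ∑ i, max (f i - t) 0 := by
  have hexcess : ∑ i, max (f i - t) 0 = ∑ i ∈ s, (f i - t) :=
    calc ∑ i, max (f i - t) 0 = ∑ i ∈ s, max (f i - t) 0 :=
          (sum_subset (subset_univ s) fun i _ hi => max_eq_right (sub_nonpos.2 (hsc i hi))).symm
      _ = ∑ i ∈ s, (f i - t) := sum_congr rfl fun i hi => max_eq_left (sub_nonneg.2 (hs i hi))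
  rw [hexcess, sum_sub_distrib, sum_const, nsmul_eq_mul]
  ring

end ExcessOverThreshold

section WeakSubMaj

variable {α β : Type*} [Fintype α] [Fintype β] {u : α → ℝ} {v : β → ℝ}

theorem WeakSubMaj.sum_max_sub_le (h : WeakSubMaj u v) (t : ℝ) :
    ∑ i, max (u i - t) 0 ≤ ∑ j, max (v j - t) 0 := by
  classical
  obtain ⟨T, hcard, hle⟩ := h {i | t < u i}
  have hu := sum_eq_card_mul_add_sum_max_sub (f := u) (s := {i | t < u i}) (t := t)
    (fun i hi => (mem_filter.1 hi).2.le) (fun i hi => not_lt.1 fun hlt => hi (by simpa using hlt))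
  have hv := sum_le_card_mul_add_sum_max_sub v T t
  rw [hcard] at hv
  linarith

theorem sum_le_sum_of_sum_max_sub_le {S : Finset α} {T : Finset β} {t : ℝ} (hcard : #T = #S)
    (hT : ∀ j ∈ T, t ≤ v j) (hTc : ∀ j ∉ T, v j ≤ t)
    (h : ∑ i, max (u i - t) 0 ≤ ∑ j, max (v j - t) 0) :
    ∑ i ∈ S, u i ≤ ∑ j ∈ T, v j := by
  have hu := sum_le_card_mul_add_sum_max_sub u S t
  have hv := sum_eq_card_mul_add_sum_max_sub hT hTc
  rw [hcard] at hv
  linarith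

end WeakSubMaj

theorem sum_fin_max_natCast_sub (j : ℕ) :
    ∀ n, j ≤ n → ∑ i : Fin n, max ((i : ℝ) - j) 0 = ((n : ℝ) - j) * ((n : ℝ) - j - 1) / 2 := by
  refine Nat.le_induction ?_ fun n hjn ih => ?_
  · simp only [sub_self, zero_mul, zero_div]
    exact sum_eq_zero fun i _ => max_eq_right (sub_nonpos.2 (mod_cast i.isLt.le))
  · have hlast : max ((n : ℝ) - j) 0 = n - j := max_eq_left (sub_nonneg.2 (mod_cast hjn))
    rw [Fin.sum_univ_castSucc]
    simp only [Fin.val_castSucc, Fin.val_last, ih, hlast]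
    push_cast
    ring

theorem weakSubMaj_iff_angle_sums_general
    (n : ℕ) (δ : ℝ)
    (x : Fin n → ℝ) :
    WeakSubMaj (fun i => |x i|) (fun i : Fin n => (i : ℝ) + δ) ↔
      ∀ j : Fin n,
        ∑ i : Fin n, max (|x i| - ((j : ℝ) + δ)) 0
          ≤ ((n : ℝ) - (j : ℝ)) * ((n : ℝ) - (j : ℝ) - 1) / 2 := by
  have hexcess (j : Fin n) : ∑ i : Fin n, max ((i : ℝ) + δ - ((j : ℝ) + δ)) 0
      = ((n : ℝ) - j) * ((n : ℝ) - j - 1) / 2 := by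
    simp only [add_sub_add_right_eq_sub]
    exact sum_fin_max_natCast_sub j n j.isLt.le
  constructor
  · intro h j
    exact (h.sum_max_sub_le _).trans (hexcess j).le
  · intro h S
    rcases Nat.eq_zero_or_pos #S with hS | hS
    · exact ⟨∅, by rw [hS, card_empty], by simp [card_eq_zero.1 hS]⟩
    have hSn : #S ≤ n := by simpa using card_le_univ S
    obtain ⟨j, hj⟩ : ∃ j : Fin n, (j : ℕ) = n - #S := ⟨⟨n - #S, by omega⟩, rfl⟩
    have hcard : #(Ici j) = #S := by rw [Fin.card_Ici]; omega
    refine ⟨Ici j, hcard, sum_le_sum_of_sum_max_sub_le (t := j + δ) hcard ?_ ?_ ?_⟩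
    · intro i hi
      simpa using (Fin.le_def.1 (mem_Ici.1 hi))
    · intro i hi
      simpa using (Fin.lt_def.1 (not_le.1 (mt mem_Ici.2 hi))).le
    · rw [hexcess]
      exact h j

/-- `|x|` is weakly sub-majorized by `(δ, 1+δ, …, n-1+δ)` iff for every threshold
`ℓ = j + δ` one has `∑ i max(|x i| - ℓ, 0) ≤ C(n - j, 2)`. -/
theorem weakSubMaj_iff_angle_sums
    (n : ℕ) (δ : ℝ) (hδ : δ = 0 ∨ δ = 1/2 ∨ δ = 1)
    (x : Fin n → ℝ) (hsort : ∀ i j : Fin n, i ≤ j → |x i| ≤ |x j|) :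
    WeakSubMaj (fun i => |x i|) (fun i : Fin n => (i : ℝ) + δ) ↔
      ∀ j : Fin n,
        ∑ i : Fin n, max (|x i| - ((j : ℝ) + δ)) 0
          ≤ ((n : ℝ) - (j : ℝ)) * ((n : ℝ) - (j : ℝ) - 1) / 2 :=
  weakSubMaj_iff_angle_sums_general n δ x
end

section
/- Let x, y ∈ ℝⁿ. Then x is weakly sub-majorized by y if and only if for every j ∈ {1,…,n}, Σ_{i=1}^{n} max(x_i − y_j, 0) ≤ Σ_{i=1}^{n} max(y_i − y_j, 0). -/
open Finset

/-- Hardy–Littlewood–Pólya / Karamata criterion: `x ≼_w y` iff for every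
threshold `y j`, `∑ i max(x i - y j, 0) ≤ ∑ i max(y i - y j, 0)`. -/
theorem weakSubMaj_iff_forall_thresholds (n : ℕ) (x y : Fin n → ℝ) :
    WeakSubMaj x y ↔
      ∀ j : Fin n,
        ∑ i : Fin n, max (x i - y j) 0 ≤ ∑ i : Fin n, max (y i - y j) 0 := by
  constructor
  · intro h j
    set t := y j with ht
    set S : Finset (Fin n) := univ.filter (fun i => t < x i) with hS
    obtain ⟨T, hTcard, hsum⟩ := h S
    have h1 : ∑ i : Fin n, max (x i - t) 0 = ∑ i ∈ S, (x i - t) := by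
      rw [hS, Finset.sum_filter]
      refine Finset.sum_congr rfl fun i _ => ?_
      rcases lt_or_ge t (x i) with hc | hc
      · rw [if_pos hc, max_eq_left (by linarith)]
      · rw [if_neg (not_lt.mpr hc), max_eq_right (by linarith)]
    have h2 : ∑ i ∈ S, (x i - t) = ∑ i ∈ S, x i - S.card * t := by
      rw [Finset.sum_sub_distrib, Finset.sum_const, nsmul_eq_mul]
    have h3 : ∑ i ∈ T, (y i - t) = ∑ i ∈ T, y i - T.card * t := by
      rw [Finset.sum_sub_distrib, Finset.sum_const, nsmul_eq_mul]
    have h4 : ∑ i ∈ T, (y i - t) ≤ ∑ i : Fin n, max (y i - t) 0 := by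
      calc ∑ i ∈ T, (y i - t) ≤ ∑ i ∈ T, max (y i - t) 0 :=
            Finset.sum_le_sum fun i _ => le_max_left _ _
        _ ≤ ∑ i : Fin n, max (y i - t) 0 :=
            Finset.sum_le_sum_of_subset_of_nonneg (Finset.subset_univ T)
              (fun i _ _ => le_max_right _ _)
    rw [h1, h2]
    rw [hTcard] at h3
    linarith [hsum, h3, h4]
  · intro h S
    rcases Nat.eq_zero_or_pos S.card with h0 | hpos
    · refine ⟨∅, by simp [h0], ?_⟩
      rw [Finset.card_eq_zero.mp h0]; simp
    · set k := S.card with hk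
      have hkn : k ≤ n := by
        simpa using (Finset.card_le_univ S)
      have hnk : n - k < n := by omega
      set a : Fin n := ⟨n - k, hnk⟩ with ha
      set σ := Tuple.sort y with hσ
      have hmono : Monotone (y ∘ σ) := Tuple.monotone_sort y
      set T : Finset (Fin n) := (Finset.Ici a).image σ with hT
      have hTcard : T.card = k := by
        rw [hT, Finset.card_image_of_injective _ σ.injective, Fin.card_Ici]
        simp [ha]; omega
      set t := y (σ a) with htt
      have hmemT : ∀ i ∈ T, t ≤ y i := by
        intro i hi
        rw [hT] at hi
        obtain ⟨b, hb, rfl⟩ := Finset.mem_image.mp hi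
        exact hmono (Finset.mem_Ici.mp hb)
      have hnotT : ∀ i ∉ T, y i ≤ t := by
        intro i hi
        have happ : σ (σ.symm i) = i := σ.apply_symm_apply i
        have hb : ¬ a ≤ σ.symm i := by
          intro hle
          apply hi
          rw [hT]
          exact Finset.mem_image.mpr ⟨σ.symm i, Finset.mem_Ici.mpr hle, happ⟩
        have h5 := hmono (le_of_lt (not_le.mp hb))
        simp only [Function.comp_apply, happ] at h5
        exact h5
      have hyeq : ∑ i : Fin n, max (y i - t) 0 = ∑ i ∈ T, y i - k * t := by
        rw [← Finset.sum_subset (Finset.subset_univ T)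
            (fun i _ hi => by rw [max_eq_right (by linarith [hnotT i hi])])]
        rw [(Finset.sum_congr rfl (fun i hi => max_eq_left (by linarith [hmemT i hi])) :
          ∑ i ∈ T, max (y i - t) 0 = ∑ i ∈ T, (y i - t))]
        rw [Finset.sum_sub_distrib, Finset.sum_const, hTcard, nsmul_eq_mul]
      refine ⟨T, by rw [hTcard], ?_⟩
      have step1 : ∑ i ∈ S, x i ≤ ∑ i : Fin n, max (x i - t) 0 + k * t := by
        have e1 : ∑ i ∈ S, x i = ∑ i ∈ S, (x i - t) + k * t := by
          rw [Finset.sum_sub_distrib, Finset.sum_const, ← hk, nsmul_eq_mul]; ring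
        rw [e1]
        have e2 : ∑ i ∈ S, (x i - t) ≤ ∑ i : Fin n, max (x i - t) 0 := by
          calc ∑ i ∈ S, (x i - t) ≤ ∑ i ∈ S, max (x i - t) 0 :=
                Finset.sum_le_sum fun i _ => le_max_left _ _
            _ ≤ ∑ i : Fin n, max (x i - t) 0 :=
                Finset.sum_le_sum_of_subset_of_nonneg (Finset.subset_univ S)
                  (fun i _ _ => le_max_right _ _)
        linarith
      have step2 := h (σ a)
      rw [← htt] at step2
      linarith [step1, step2, hyeq]
end

section
/- Let φ be a signed permutation of {1,…,n}, i.e., a bijection of {±1,…,±n} with φ(−i) = −φ(i). Define a deterministic type-Cₙ tournament T_φ on the complete signed graph by: p⁻_{ij} = 1 if φ(i) > φ(j) and 0 otherwise; p⁺_{ij} = 1 if φ(i) + φ(j) > 0 and 0 otherwise; pℓ_i = 1 if φ(i) > 0 and 0 otherwise. Then the mean score sequence of T_φ is (φ(1), …, φ(n)); that is, for every i, Σ_{j≠i}(p⁻_{ij} − 1/2) + Σ_{j≠i}(p⁺_{ij} − 1/2) + 2(pℓ_i − 1/2) = φ(i). -/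
open Finset

/-- The mean score sequence of the deterministic type-`Cₙ` tournament `T_φ`
associated to a signed permutation `φ` (encoded as `φ : Fin n → ℤ` whose
absolute values `|φ i| = σ i + 1` form a permutation of `{1, …, n}`) is
`(φ 1, …, φ n)`. -/
theorem score_of_signedPerm_tournament
    (n : ℕ) (φ : Fin n → ℤ) (σ : Equiv.Perm (Fin n))
    (hφ : ∀ i, |φ i| = (σ i : ℤ) + 1) (i : Fin n) :
    (∑ j ∈ univ.erase i, ((if φ j < φ i then (1 : ℝ) else 0) - 1/2))
      + (∑ j ∈ univ.erase i, ((if 0 < φ i + φ j then (1 : ℝ) else 0) - 1/2))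
      + 2 * ((if 0 < φ i then (1 : ℝ) else 0) - 1/2) = (φ i : ℝ) := by
  have hn : 1 ≤ n := i.pos
  set t := φ i with ht
  have habs : |t| = (σ i : ℤ) + 1 := hφ i
  -- key counting lemma
  have key : (∑ j : Fin n, ((if φ j < t then (1:ℝ) else 0) + (if 0 < t + φ j then 1 else 0)))
      = n + t - (if 0 < t then (1:ℝ) else 0) := by
    have step1 : ∀ j : Fin n, ((if φ j < t then (1:ℝ) else 0) + (if 0 < t + φ j then 1 else 0))
        = ((if ((σ j : ℤ)+1) < t then (1:ℝ) else 0) + (if 0 < t + ((σ j : ℤ)+1) then 1 else 0)) := by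
      intro j
      rcases (abs_eq (by positivity)).mp (hφ j) with h | h
      · rw [h]
      · rw [h, if_congr (show -((σ j : ℤ)+1) < t ↔ 0 < t + ((σ j : ℤ)+1) by omega) rfl rfl,
          if_congr (show 0 < t + -((σ j : ℤ)+1) ↔ ((σ j : ℤ)+1) < t by omega) rfl rfl]
        ring
    rw [Finset.sum_congr rfl (fun j _ => step1 j)]
    rw [show (∑ j : Fin n, ((if ((σ j : ℤ)+1) < t then (1:ℝ) else 0) + (if 0 < t + ((σ j : ℤ)+1) then 1 else 0)))
        = ∑ j : Fin n, ((if ((j : ℤ)+1) < t then (1:ℝ) else 0) + (if 0 < t + ((j : ℤ)+1) then 1 else 0)) from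
      Equiv.sum_comp σ (fun j => ((if ((j : ℤ)+1) < t then (1:ℝ) else 0) + (if 0 < t + ((j : ℤ)+1) then 1 else 0)))]
    have hσi : (σ i : ℕ) < n := (σ i).isLt
    rcases (abs_eq (by positivity)).mp habs with h | h
    · -- t = σ i + 1 > 0
      have hpos : 0 < t := by omega
      rw [if_pos hpos]
      have : ∀ j : Fin n, ((if ((j : ℤ)+1) < t then (1:ℝ) else 0) + (if 0 < t + ((j : ℤ)+1) then 1 else 0))
          = (if (j : ℕ) < (σ i : ℕ) then (1:ℝ) else 0) + 1 := by
        intro j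
        rw [if_pos (show (0:ℤ) < t + ((j:ℤ)+1) by omega),
          if_congr (show ((j : ℤ)+1) < t ↔ (j:ℕ) < (σ i : ℕ) by omega) rfl rfl]
      rw [Finset.sum_congr rfl (fun j _ => this j), Finset.sum_add_distrib, Finset.sum_const,
        card_univ, Fintype.card_fin]
      rw [Fin.sum_univ_eq_sum_range (fun m => if m < (σ i : ℕ) then (1:ℝ) else 0)]
      have hsub : Finset.range (σ i : ℕ) ⊆ Finset.range n := Finset.range_subset_range.mpr (le_of_lt hσi)
      rw [Finset.sum_congr rfl (fun m _ => by
        rw [show (if m < (σ i : ℕ) then (1:ℝ) else 0) = (if m ∈ Finset.range (σ i : ℕ) then (1:ℝ) else 0) by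
          simp [Finset.mem_range]])]
      rw [Finset.sum_ite_mem, Finset.inter_eq_right.mpr hsub, Finset.sum_const, Finset.card_range]
      have h2 : ((t:ℤ):ℝ) = ((σ i : ℕ):ℝ) + 1 := by exact_mod_cast congrArg (fun z : ℤ => (z : ℝ)) h
      rw [h2]; ring
    · -- t = -(σ i + 1) < 0
      have hneg : ¬ 0 < t := by omega
      rw [if_neg hneg]
      have : ∀ j : Fin n, ((if ((j : ℤ)+1) < t then (1:ℝ) else 0) + (if 0 < t + ((j : ℤ)+1) then 1 else 0))
          = 1 - (if (j : ℕ) < (σ i : ℕ) + 1 then (1:ℝ) else 0) := by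
        intro j
        rw [if_neg (show ¬ (((j:ℤ)+1) < t) by omega), if_congr (show 0 < t + ((j : ℤ)+1) ↔ ¬ ((j:ℕ) < (σ i : ℕ) + 1) by omega) rfl rfl]
        by_cases hc : (j:ℕ) < (σ i : ℕ) + 1 <;> simp [hc]
      rw [Finset.sum_congr rfl (fun j _ => this j), Finset.sum_sub_distrib, Finset.sum_const,
        card_univ, Fintype.card_fin]
      rw [Fin.sum_univ_eq_sum_range (fun m => if m < (σ i : ℕ) + 1 then (1:ℝ) else 0)]
      have hsub : Finset.range ((σ i : ℕ) + 1) ⊆ Finset.range n := Finset.range_subset_range.mpr hσi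
      rw [Finset.sum_congr rfl (fun m _ => by
        rw [show (if m < (σ i : ℕ) + 1 then (1:ℝ) else 0) = (if m ∈ Finset.range ((σ i : ℕ)+1) then (1:ℝ) else 0) by
          simp [Finset.mem_range]])]
      rw [Finset.sum_ite_mem, Finset.inter_eq_right.mpr hsub, Finset.sum_const, Finset.card_range]
      have h2 : ((t:ℤ):ℝ) = -(((σ i : ℕ):ℝ) + 1) := by exact_mod_cast congrArg (fun z : ℤ => (z : ℝ)) h
      rw [h2]; ring
  rw [Finset.sum_add_distrib] at key
  rw [Finset.sum_sub_distrib, Finset.sum_sub_distrib, Finset.sum_const,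
    Finset.card_erase_of_mem (mem_univ i), card_univ, Fintype.card_fin,
    Finset.sum_erase_eq_sub (mem_univ i), Finset.sum_erase_eq_sub (mem_univ i),
    if_neg (lt_irrefl t),
    if_congr (show (0:ℤ) < t + t ↔ 0 < t by omega) rfl rfl]
  have hc : ((n - 1 : ℕ) : ℝ) = (n : ℝ) - 1 := by
    rw [Nat.cast_sub hn, Nat.cast_one]
  rw [nsmul_eq_mul, hc]
  by_cases hpos : (0:ℤ) < t <;> simp only [hpos, if_true, if_false] at key ⊢ <;> linarith [key]
end

section
/- Let x ∈ ℝⁿ satisfy |x| weakly sub-majorized by (δ, 1+δ, …, n−1+δ) with δ ∈ {0, 1/2, 1}. Suppose each |x_j| ≥ 1 is reduced by 1 and each |x_j| < 1 is reduced to 0; i.e., define x′_j = max(|x_j| − 1, 0) for j ∈ S ⊆ [n] with |S| = n − 1. Then (x′_j)_{j∈S} is weakly sub-majorized by (δ, 1+δ, …, n−2+δ) ∈ ℝ^{n−1}. -/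
/-!
Fix a subset `A` of `S` and let `m` be the number of `j ∈ A` with `|x j| ≥ 1`; only these
contribute to `∑_{j ∈ A} x'_j`. By the hypothesis, their `|x j|` sum to at most the sum of the
`m` largest entries of `(δ, 1 + δ, …, n - 1 + δ)`. Lowering each of those `m` entries by one gives
the `m` largest entries of `(δ, …, n - 2 + δ)`, and as these entries are nonnegative their sum is
at most that of the `#A` largest ones.
-/

open Finset

theorem Finset.sum_range_card_le_sum (s : Finset ℕ) : ∑ j ∈ range #s, j ≤ ∑ i ∈ s, i := by
  induction s using Finset.induction_on_max with
  | empty => simp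
  | insert a s ha ih =>
    have has : a ∉ s := fun h => lt_irrefl a (ha a h)
    have hcard : #s ≤ a := by
      simpa using card_le_card (fun x hx => mem_range.2 (ha x hx) : s ⊆ range a)
    rw [card_insert_of_notMem has, sum_range_succ, sum_insert has]
    omega

theorem Finset.sum_max_sub_zero {α β : Type*} [AddCommGroup β] [LinearOrder β]
    [IsOrderedAddMonoid β] (s : Finset α) (f : α → β) (c : β) :
    ∑ a ∈ s, max (f a - c) 0 = ∑ a ∈ s with c ≤ f a, (f a - c) := by
  rw [sum_filter]
  refine sum_congr rfl fun a _ => ?_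
  split_ifs with h
  · exact max_eq_left (sub_nonneg.2 h)
  · exact max_eq_right (sub_nonpos.2 (not_le.1 h).le)

/-- The sum of the `k` largest entries of `(δ, 1 + δ, …, M - 1 + δ)`. -/
def topSum (M k : ℕ) (δ : ℝ) : ℝ := ∑ j ∈ range k, ((M : ℝ) - 1 + δ - j)

theorem sum_val_add_le_topSum {n : ℕ} (T : Finset (Fin n)) (δ : ℝ) :
    ∑ i ∈ T, ((i : ℝ) + δ) ≤ topSum n #T δ := by
  have hrev : ∑ j ∈ range #T, (j : ℝ) ≤ ∑ i ∈ T, ((Fin.rev i : ℕ) : ℝ) := by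
    have h := sum_range_card_le_sum (T.map (Fin.revPerm.toEmbedding.trans Fin.valEmbedding))
    simp only [card_map, sum_map, Function.Embedding.trans_apply, Equiv.coe_toEmbedding,
      Fin.revPerm_apply, Fin.valEmbedding_apply] at h
    have h := (Nat.cast_le (α := ℝ)).2 h
    push_cast at h
    exact h
  have hval (i : Fin n) : (i : ℝ) + δ = (n - 1 + δ) - (Fin.rev i : ℕ) := by
    rw [Fin.val_rev, Nat.cast_sub i.isLt]; push_cast; ring
  calc ∑ i ∈ T, ((i : ℝ) + δ) = #T • ((n : ℝ) - 1 + δ) - ∑ i ∈ T, ((Fin.rev i : ℕ) : ℝ) := by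
        rw [sum_congr rfl fun i _ => hval i, sum_sub_distrib, sum_const]
    _ ≤ #T • ((n : ℝ) - 1 + δ) - ∑ j ∈ range #T, (j : ℝ) := by gcongr
    _ = topSum n #T δ := by rw [topSum, sum_sub_distrib, sum_const, card_range]

theorem exists_card_eq_sum_val_add_eq_topSum {M k : ℕ} (δ : ℝ) (hk : k ≤ M) :
    ∃ T : Finset (Fin M), #T = k ∧ ∑ i ∈ T, ((i : ℝ) + δ) = topSum M k δ := by
  refine ⟨univ.map ((Fin.castLEEmb hk).trans Fin.revPerm.toEmbedding), by simp, ?_⟩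
  rw [sum_map, topSum, ← Fin.sum_univ_eq_sum_range]
  refine sum_congr rfl fun j _ => ?_
  simp only [Function.Embedding.trans_apply, Fin.castLEEmb_apply, Equiv.coe_toEmbedding,
    Fin.revPerm_apply, Fin.val_rev, Fin.val_castLE]
  rw [Nat.cast_sub (by omega)]; push_cast; ring

theorem topSum_le_topSum {M m k : ℕ} {δ : ℝ} (hδ : 0 ≤ δ) (hmk : m ≤ k) (hk : k ≤ M) :
    topSum M m δ ≤ topSum M k δ := by
  refine sum_le_sum_of_subset_of_nonneg (range_subset_range.2 hmk) fun j hj _ => ?_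
  have : (j : ℝ) + 1 ≤ M := by exact_mod_cast (mem_range.1 hj).trans_le hk
  linarith

theorem topSum_sub_card {n m : ℕ} (δ : ℝ) (hm : m ≤ n) :
    topSum n m δ - m = topSum (n - 1) m δ := by
  rcases n with _ | n
  · simp [Nat.le_zero.1 hm, topSum]
  · have hm_eq : (m : ℝ) = ∑ _j ∈ range m, (1 : ℝ) := by simp
    rw [topSum, topSum, hm_eq, ← sum_sub_distrib, Nat.add_sub_cancel]
    push_cast
    exact sum_congr rfl fun j _ => by ring

/-- Key inductive step of the Coxeter Havel–Hakimi algorithm (Case 1b): if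
`|x| ≼_w (δ, 1+δ, …, n-1+δ)`, `S ⊆ [n]` has `n - 1` elements, and
`x'_j = max(|x_j| - 1, 0)` for `j ∈ S`, then `x' ≼_w (δ, 1+δ, …, n-2+δ)`. -/
theorem reduced_weakSubMaj
    (n : ℕ) (δ : ℝ) (hδ : δ = 0 ∨ δ = 1/2 ∨ δ = 1)
    (x : Fin n → ℝ)
    (hmaj : WeakSubMaj (fun i => |x i|) (fun i : Fin n => (i : ℝ) + δ))
    (S : Finset (Fin n)) (hS : S.card = n - 1) :
    WeakSubMaj (fun j : {j // j ∈ S} => max (|x j.1| - 1) 0)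
      (fun i : Fin (n - 1) => (i : ℝ) + δ) := by
  have hδ0 : 0 ≤ δ := by rcases hδ with rfl | rfl | rfl <;> norm_num
  intro A
  set P := A.filter (fun j => 1 ≤ |x j.1|)
  have hA : #A ≤ n - 1 := hS ▸ (card_le_univ A).trans_eq (Fintype.card_coe S)
  have hPA : #P ≤ #A := card_filter_le A _
  obtain ⟨T, hTcard, hT⟩ := hmaj (P.map (Function.Embedding.subtype _))
  obtain ⟨T', hT'card, hT'⟩ := exists_card_eq_sum_val_add_eq_topSum δ hA
  refine ⟨T', hT'card, ?_⟩
  calc ∑ j ∈ A, max (|x j.1| - 1) 0 = ∑ j ∈ P, |x j.1| - #P := by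
        rw [sum_max_sub_zero, sum_sub_distrib, sum_const, nsmul_one]
    _ ≤ topSum n #P δ - #P := by
        gcongr
        calc ∑ j ∈ P, |x j.1| = ∑ i ∈ P.map (Function.Embedding.subtype _), |x i| := by
              rw [sum_map, Function.Embedding.coe_subtype]
          _ ≤ ∑ i ∈ T, ((i : ℝ) + δ) := hT
          _ ≤ topSum n #P δ := by
              simpa [hTcard] using sum_val_add_le_topSum T δ
    _ = topSum (n - 1) #P δ := topSum_sub_card δ (by omega)
    _ ≤ topSum (n - 1) #A δ := topSum_le_topSum hδ0 hPA hA
    _ = ∑ i ∈ T', ((i : ℝ) + δ) := hT'.symm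
end

section
/- Fix n ≥ 1 and let W be the group of signed permutation matrices acting on ℝⁿ (matrices with entries in {−1,0,1}, one nonzero per row and column). For x, y ∈ ℝⁿ with y nonnegative, x lies in the convex hull of the orbit {A y : A ∈ W} if and only if |x| is weakly sub-majorized by y. -/
/-!
A vector `z = (±y_{σ i})_i` of the orbit has `|z| = y ∘ σ`, so it is weakly sub-majorized by `y`;
since weak sub-majorization of `|x|` by `y` is a convex condition on `x`, it holds on the whole
convex hull. Conversely, as the orbit is finite, by separation it suffices to find, for each
`c`, an orbit point `z` with `⟪x, c⟫ ≤ ⟪z, c⟫`. Give `z` the signs of `c` and take a permutation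
`σ` maximizing `∑ |c i| * y (σ i)`: a swap argument shows that `σ` carries every superlevel set
of `|c|` onto a set on which `y` is largest, and Abel summation over these superlevel sets turns
the hypothesis into `∑ |c i| * |x i| ≤ ∑ |c i| * y (σ i)`.
-/

open Finset

variable {ι : Type*}

theorem Finset.sum_sub_mul_nonpos_of_sum_superlevel_nonpos [DecidableEq ι] (s : Finset ι)
    (a e : ι → ℝ) {c : ℝ} (hc : ∀ i ∈ s, c ≤ a i)
    (h : ∀ t > c, ∑ i ∈ s with t ≤ a i, e i ≤ 0) :
    ∑ i ∈ s, (a i - c) * e i ≤ 0 := by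
  induction s using Finset.induction_on_min_value a generalizing c with
  | empty => simp
  | insert j s hj hmin ih =>
    have hsplit : ∑ i ∈ insert j s, (a i - c) * e i
        = (a j - c) * ∑ i ∈ insert j s, e i + ∑ i ∈ s, (a i - a j) * e i := by
      rw [sum_insert hj, sum_insert hj, mul_add, mul_sum, add_assoc, ← sum_add_distrib]
      exact congrArg _ (sum_congr rfl fun i _ => by ring)
    have hcj : c ≤ a j := hc j (mem_insert_self j s)
    have hfirst : (a j - c) * ∑ i ∈ insert j s, e i ≤ 0 := by
      rcases hcj.eq_or_lt with hcj | hcj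
      · simp [hcj]
      · have := h (a j) hcj
        rw [filter_true_of_mem fun i hi => ?_] at this
        · exact mul_nonpos_of_nonneg_of_nonpos (sub_nonneg.2 hcj.le) this
        · rcases mem_insert.1 hi with rfl | hi
          exacts [le_rfl, hmin i hi]
    have hrest : ∑ i ∈ s, (a i - a j) * e i ≤ 0 := by
      refine ih hmin fun t ht => ?_
      have := h t (hcj.trans_lt ht)
      rwa [filter_insert, if_neg (not_le.2 ht)] at this
    linarith

theorem Finset.sum_le_sum_of_card_eq_of_forall_le_of_notMem [DecidableEq ι] {s t : Finset ι}
    (f : ι → ℝ) (hcard : t.card = s.card) (hf : ∀ i ∈ s, ∀ j ∉ s, f j ≤ f i) :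
    ∑ j ∈ t, f j ≤ ∑ i ∈ s, f i := by
  rw [← sum_inter_add_sum_sdiff t s, ← sum_inter_add_sum_sdiff s t, inter_comm,
    add_le_add_iff_left]
  obtain ⟨e⟩ : Nonempty ((t \ s : Finset ι) ≃ (s \ t : Finset ι)) :=
    ⟨equivOfCardEq (card_sdiff_comm hcard)⟩
  rw [← sum_coe_sort (t \ s), ← sum_coe_sort (s \ t), ← e.sum_comp]
  refine sum_le_sum fun j _ => ?_
  exact hf _ (mem_sdiff.1 (e j).2).1 _ (mem_sdiff.1 j.2).2

theorem monovary_comp_of_forall_sum_mul_comp_le [Fintype ι] [DecidableEq ι] {a y : ι → ℝ}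
    {σ : Equiv.Perm ι} (hσ : ∀ τ : Equiv.Perm ι, ∑ i, a i * y (τ i) ≤ ∑ i, a i * y (σ i)) :
    Monovary a (y ∘ σ) := by
  intro i j hy
  by_contra! ha
  have hij : i ≠ j := by rintro rfl; exact lt_irrefl _ hy
  have hswap : ∑ k, a k * y ((σ * Equiv.swap i j) k) - ∑ k, a k * y (σ k)
      = (a i - a j) * (y (σ j) - y (σ i)) := by
    rw [← sum_sub_distrib, Fintype.sum_eq_add i j hij fun k hk => by
      simp [Equiv.swap_apply_of_ne_of_ne hk.1 hk.2]]
    simp only [Equiv.Perm.mul_apply, Equiv.swap_apply_left, Equiv.swap_apply_right]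
    ring
  simp only [Function.comp_apply] at hy
  linarith [hσ (σ * Equiv.swap i j), mul_pos (sub_pos.2 ha) (sub_pos.2 hy)]

theorem WeakSubMaj.exists_perm_sum_mul_le [Fintype ι] [DecidableEq ι] {a b y : ι → ℝ}
    (h : WeakSubMaj b y) (ha : ∀ i, 0 ≤ a i) :
    ∃ σ : Equiv.Perm ι, ∑ i, a i * b i ≤ ∑ i, a i * y (σ i) := by
  obtain ⟨σ, hσ⟩ := Finite.exists_max fun σ : Equiv.Perm ι => ∑ i, a i * y (σ i)
  have hmono := (monovary_comp_of_forall_sum_mul_comp_le hσ).symm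
  refine ⟨σ, ?_⟩
  suffices ∑ i, (a i - 0) * (b i - y (σ i)) ≤ 0 by
    simpa [mul_sub] using this
  refine sum_sub_mul_nonpos_of_sum_superlevel_nonpos _ _ _ (fun i _ => ha i) fun t _ => ?_
  set S := univ.filter (t ≤ a ·)
  obtain ⟨T, hT, hST⟩ := h S
  have hTS : ∑ j ∈ T, y j ≤ ∑ i ∈ S, y (σ i) := by
    refine (sum_le_sum_of_card_eq_of_forall_le_of_notMem y (by rw [hT, card_map]) ?_).trans_eq
      (sum_map S σ.toEmbedding y)
    simp only [mem_map_equiv]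
    intro i hi j hj
    simp only [S, mem_filter, mem_univ, true_and, not_le] at hi hj
    simpa using hmono (hj.trans_le hi)
  rw [sum_sub_distrib]
  linarith

theorem convex_setOf_weakSubMaj_abs [Fintype ι] (y : ι → ℝ) :
    Convex ℝ {x : ι → ℝ | WeakSubMaj (fun i => |x i|) y} := by
  intro x₁ h₁ x₂ h₂ a b ha hb hab S
  obtain ⟨T₁, hT₁, hS₁⟩ := h₁ S
  obtain ⟨T₂, hT₂, hS₂⟩ := h₂ S
  have hconv : ∑ i ∈ S, |(a • x₁ + b • x₂) i|
      ≤ a * ∑ i ∈ S, |x₁ i| + b * ∑ i ∈ S, |x₂ i| := by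
    rw [mul_sum, mul_sum, ← sum_add_distrib]
    refine sum_le_sum fun i _ => (abs_add_le _ _).trans_eq ?_
    simp [abs_mul, abs_of_nonneg ha, abs_of_nonneg hb]
  have hbound : ∀ M, ∑ j ∈ T₁, y j ≤ M → ∑ j ∈ T₂, y j ≤ M →
      ∑ i ∈ S, |(a • x₁ + b • x₂) i| ≤ M :=
    fun M hM₁ hM₂ => calc
      _ ≤ a * ∑ i ∈ S, |x₁ i| + b * ∑ i ∈ S, |x₂ i| := hconv
      _ ≤ a * M + b * M := by gcongr; exacts [hS₁.trans hM₁, hS₂.trans hM₂]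
      _ = M := by rw [← add_mul, hab, one_mul]
  rcases le_total (∑ j ∈ T₁, y j) (∑ j ∈ T₂, y j) with hle | hle
  exacts [⟨T₂, hT₂, hbound _ hle le_rfl⟩, ⟨T₁, hT₁, hbound _ le_rfl hle⟩]

theorem WeakSubMaj.exists_signed_perm_sum_mul_le [Fintype ι] [DecidableEq ι] {x y : ι → ℝ}
    (h : WeakSubMaj (fun i => |x i|) y) (c : ι → ℝ) :
    ∃ (σ : Equiv.Perm ι) (ε : ι → ℝ), (∀ i, |ε i| = 1) ∧
      ∑ i, x i * c i ≤ ∑ i, ε i * y (σ i) * c i := by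
  obtain ⟨σ, hσ⟩ := h.exists_perm_sum_mul_le fun i => abs_nonneg (c i)
  refine ⟨σ, fun i => if 0 ≤ c i then 1 else -1, fun i => by dsimp only; split_ifs <;> simp, ?_⟩
  calc ∑ i, x i * c i ≤ ∑ i, |c i| * |x i| :=
        sum_le_sum fun i _ => (le_abs_self _).trans_eq (by rw [abs_mul, mul_comm])
    _ ≤ ∑ i, |c i| * y (σ i) := hσ
    _ = ∑ i, (if 0 ≤ c i then 1 else -1) * y (σ i) * c i := by
        refine sum_congr rfl fun i _ => ?_
        split_ifs with hc
        · rw [abs_of_nonneg hc]; ring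
        · rw [abs_of_neg (not_le.1 hc)]; ring

theorem weakSubMaj_abs_mul_comp_perm [Fintype ι] {y ε : ι → ℝ} (σ : Equiv.Perm ι)
    (hε : ∀ i, |ε i| = 1) (hy : ∀ i, 0 ≤ y i) :
    WeakSubMaj (fun i => |ε i * y (σ i)|) y := fun S =>
  ⟨S.map σ.toEmbedding, card_map _, by simp [abs_mul, hε, abs_of_nonneg (hy _)]⟩

theorem mem_convexHull_of_forall_exists_sum_mul_le [Fintype ι] {s : Set (ι → ℝ)}
    (hs : s.Finite) {x : ι → ℝ} (h : ∀ c : ι → ℝ, ∃ z ∈ s, ∑ i, x i * c i ≤ ∑ i, z i * c i) :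
    x ∈ convexHull ℝ s := by
  classical
  by_contra hx
  obtain ⟨f, u, hfs, hfx⟩ := geometric_hahn_banach_closed_point (convex_convexHull ℝ s)
    (hs.isClosed_convexHull ℝ) hx
  have hf : ∀ v, f v = ∑ i, v i * f (fun j => if i = j then 1 else 0) :=
    LinearMap.pi_apply_eq_sum_univ (f : (ι → ℝ) →ₗ[ℝ] ℝ)
  obtain ⟨z, hz, hxz⟩ := h fun i => f (fun j => if i = j then 1 else 0)
  have := hfs z (subset_convexHull ℝ s hz)
  rw [hf] at hfx this
  linarith

namespace Matrix

variable {n : Type*} [Fintype n] [DecidableEq n]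

theorem diagonal_mul_permMatrix_apply (ε : n → ℝ) (σ : Equiv.Perm n) (i j : n) :
    (diagonal ε * σ.permMatrix ℝ) i j = if σ i = j then ε i else 0 := by
  simp [diagonal_mul, PEquiv.toMatrix_apply]

theorem diagonal_mul_permMatrix_mulVec (ε : n → ℝ) (σ : Equiv.Perm n) (v : n → ℝ) :
    (diagonal ε * σ.permMatrix ℝ) *ᵥ v = fun i => ε i * v (σ i) := by
  rw [← mulVec_mulVec, permMatrix_mulVec]
  ext i
  simp [mulVec_diagonal]

end Matrix

open Matrix

theorem IsSignedPermMatrix.exists_eq_diagonal_mul_permMatrix {n : ℕ}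
    {A : Matrix (Fin n) (Fin n) ℝ} (hA : IsSignedPermMatrix A) :
    ∃ (σ : Equiv.Perm (Fin n)) (ε : Fin n → ℝ), (∀ i, |ε i| = 1) ∧
      A = diagonal ε * σ.permMatrix ℝ := by
  obtain ⟨hent, hrow, hcol⟩ := hA
  choose g hg hg' using hrow
  have hinj : Function.Injective g := fun i₁ i₂ h => (hcol (g i₁)).unique (hg i₁) (h ▸ hg i₂)
  refine ⟨Equiv.ofBijective g hinj.bijective_of_finite, fun i => A i (g i), fun i => ?_, ?_⟩
  · rcases hent i (g i) with h | h | h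
    exacts [by simp [h], absurd h (hg i), by simp [h]]
  · ext i j
    rw [diagonal_mul_permMatrix_apply, Equiv.ofBijective_apply]
    split_ifs with hj
    · rw [hj]
    · by_contra hij
      exact hj (hg' i j hij).symm

theorem isSignedPermMatrix_diagonal_mul_permMatrix {n : ℕ} (σ : Equiv.Perm (Fin n))
    {ε : Fin n → ℝ} (hε : ∀ i, |ε i| = 1) :
    IsSignedPermMatrix (diagonal ε * σ.permMatrix ℝ) := by
  have hε₀ : ∀ i, ε i ≠ 0 := fun i h => by simpa [h] using hε i
  simp only [IsSignedPermMatrix, diagonal_mul_permMatrix_apply]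
  refine ⟨fun i j => ?_, fun i => ⟨σ i, by simp [hε₀], fun j => ?_⟩,
    fun j => ⟨σ.symm j, by simp [hε₀], fun i => ?_⟩⟩
  · split_ifs
    · rcases abs_eq (zero_le_one' ℝ) |>.1 (hε i) with h | h <;> simp [h]
    · simp
  · simp only [ne_eq, ite_eq_right_iff, not_forall]
    exact fun ⟨h, _⟩ => h.symm
  · simp only [ne_eq, ite_eq_right_iff, not_forall]
    exact fun ⟨h, _⟩ => by rw [← h, Equiv.symm_apply_apply]

theorem finite_setOf_isSignedPermMatrix (n : ℕ) :
    {A : Matrix (Fin n) (Fin n) ℝ | IsSignedPermMatrix A}.Finite := by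
  refine (Set.Finite.pi fun _ => Set.Finite.pi fun _ =>
    (Set.toFinite {-1, 0, 1} : ({-1, 0, 1} : Set ℝ).Finite)).subset fun A hA => ?_
  simpa [Set.mem_pi] using hA.1

/-- `W`-majorization for the hyperoctahedral group coincides with weak
sub-majorization of absolute values: for nonnegative `y`, `x` is in the convex
hull of the orbit of `y` under signed permutation matrices iff `|x| ≼_w y`. -/
theorem mem_convexHull_signedPerm_orbit_iff_weakSubMaj
    (n : ℕ) (x y : Fin n → ℝ) (hy : ∀ i, 0 ≤ y i) :
    x ∈ convexHull ℝ {z : Fin n → ℝ |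
        ∃ A : Matrix (Fin n) (Fin n) ℝ, IsSignedPermMatrix A ∧ z = A.mulVec y} ↔
      WeakSubMaj (fun i => |x i|) y := by
  constructor
  · refine fun hx => convexHull_min ?_ (convex_setOf_weakSubMaj_abs y) hx
    rintro z ⟨A, hA, rfl⟩
    obtain ⟨σ, ε, hε, rfl⟩ := hA.exists_eq_diagonal_mul_permMatrix
    rw [diagonal_mul_permMatrix_mulVec]
    exact weakSubMaj_abs_mul_comp_perm σ hε hy
  · intro h
    have hfin : {z | ∃ A : Matrix (Fin n) (Fin n) ℝ, IsSignedPermMatrix A ∧ z = A *ᵥ y}.Finite :=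
      ((finite_setOf_isSignedPermMatrix n).image (· *ᵥ y)).subset
        fun z ⟨A, hA, hz⟩ => ⟨A, hA, hz.symm⟩
    refine mem_convexHull_of_forall_exists_sum_mul_le hfin fun c => ?_
    obtain ⟨σ, ε, hε, hle⟩ := h.exists_signed_perm_sum_mul_le c
    refine ⟨_, ⟨_, isSignedPermMatrix_diagonal_mul_permMatrix σ hε, rfl⟩, ?_⟩
    rwa [diagonal_mul_permMatrix_mulVec]
end

section
/- For the complete type-Cₙ signed graph (all negative edges, all positive edges, all loops), a subset S ⊆ [n] of size k can win at most k(n−k)/2 + [k(n−k)/2 + C(k,2)] + k total points; equivalently, for every mean score sequence x of a random type-Cₙ tournament on the complete signed graph and every subset {i₁,…,i_k} ⊆ [n], one has |x_{i₁}| + … + |x_{i_k}| ≤ n + (n−1) + … + (n−k+1). -/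
open Finset

/-- Any `k` players in a complete type-`Cₙ` tournament win at most
`n + (n-1) + ⋯ + (n-k+1)` points in total. -/
theorem subset_score_bound (n : ℕ) (x : Fin n → ℝ)
    (hx : IsMeanScoreSeqC n x) (S : Finset (Fin n)) :
    ∑ i ∈ S, |x i| ≤ ∑ j ∈ Finset.range S.card, ((n : ℝ) - (j : ℝ)) := by
  classical
  rcases S.eq_empty_or_nonempty with rfl | hne
  · simp
  obtain ⟨pm, pp, pl, hpm01, hpmanti, hpp01, hppsym, hpl01, hxdef⟩ := hx
  have hkn : S.card ≤ n := by simpa using S.card_le_univ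
  have hk1 : 1 ≤ S.card := Finset.card_pos.2 hne
  set e : Fin n → ℝ := fun i => if 0 ≤ x i then (1:ℝ) else -1 with he
  have he1 : ∀ i, e i = 1 ∨ e i = -1 := by
    intro i; by_cases h : 0 ≤ x i <;> simp [he, h]
  have habs : ∀ i, |x i| = e i * x i := by
    intro i; by_cases h : 0 ≤ x i
    · simp [he, h, abs_of_nonneg h]
    · push_neg at h
      simp [he, not_le.2 h, abs_of_neg h]
  -- split the erased universe into S-part and complement
  have hsplit : ∀ i ∈ S, ∀ f : Fin n → ℝ,
      ∑ j ∈ univ.erase i, f j = ∑ j ∈ S.erase i, f j + ∑ j ∈ univ \ S, f j := by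
    intro i hi f
    have hU : S.erase i ∪ (univ \ S) = univ.erase i := by
      ext j
      simp only [mem_union, mem_erase, mem_sdiff, mem_univ, true_and, and_true]
      constructor
      · rintro (⟨hj, _⟩ | hj)
        · exact hj
        · rintro rfl; exact hj hi
      · intro hj
        by_cases hjS : j ∈ S
        · exact Or.inl ⟨hj, hjS⟩
        · exact Or.inr hjS
    have hd : Disjoint (S.erase i) (univ \ S) :=
      Finset.disjoint_of_subset_left (Finset.erase_subset i S) Finset.disjoint_sdiff
    rw [← hU, Finset.sum_union hd]
  -- swapping indices in a double sum over off-diagonal pairs of S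
  have hswap : ∀ g : Fin n → Fin n → ℝ,
      ∑ i ∈ S, ∑ j ∈ S.erase i, g i j = ∑ i ∈ S, ∑ j ∈ S.erase i, g j i := by
    intro g
    simp_rw [← Finset.filter_ne', Finset.sum_filter]
    rw [Finset.sum_comm]
    refine Finset.sum_congr rfl fun j _ => Finset.sum_congr rfl fun i _ => ?_
    exact if_congr ne_comm rfl rfl
  -- decomposition of the total
  have hLHS : ∑ i ∈ S, |x i|
      = (∑ i ∈ S, ∑ j ∈ S.erase i, e i * ((pm i j - 1/2) + (pp i j - 1/2)))
      + (∑ i ∈ S, ∑ j ∈ univ \ S, e i * ((pm i j - 1/2) + (pp i j - 1/2)))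
      + (∑ i ∈ S, e i * (2 * (pl i - 1/2))) := by
    rw [← Finset.sum_add_distrib, ← Finset.sum_add_distrib]
    refine Finset.sum_congr rfl fun i hi => ?_
    have h1 : e i * x i
        = ∑ j ∈ univ.erase i, e i * ((pm i j - 1/2) + (pp i j - 1/2))
          + e i * (2 * (pl i - 1/2)) := by
      rw [hxdef i]
      simp only [mul_add]
      rw [Finset.sum_add_distrib, ← Finset.mul_sum, ← Finset.mul_sum]
    rw [habs i, h1, hsplit i hi (fun j => e i * ((pm i j - 1/2) + (pp i j - 1/2)))]
  -- bound A
  have hAle : (∑ i ∈ S, ∑ j ∈ S.erase i, e i * ((pm i j - 1/2) + (pp i j - 1/2)))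
      ≤ (S.card : ℝ) * ((S.card : ℝ) - 1) / 2 := by
    have hsw := hswap (fun i j => e i * ((pm i j - 1/2) + (pp i j - 1/2)))
    have h2 : (∑ i ∈ S, ∑ j ∈ S.erase i, e i * ((pm i j - 1/2) + (pp i j - 1/2)))
        + (∑ i ∈ S, ∑ j ∈ S.erase i, e i * ((pm i j - 1/2) + (pp i j - 1/2)))
        ≤ (S.card : ℝ) * ((S.card : ℝ) - 1) := by
      nth_rewrite 2 [hsw]
      rw [← Finset.sum_add_distrib]
      have hbound : ∀ i ∈ S,
          (∑ j ∈ S.erase i, e i * ((pm i j - 1/2) + (pp i j - 1/2)))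
          + (∑ j ∈ S.erase i, e j * ((pm j i - 1/2) + (pp j i - 1/2)))
          ≤ (S.card : ℝ) - 1 := by
        intro i hi
        rw [← Finset.sum_add_distrib]
        have hterm : ∀ j ∈ S.erase i,
            e i * ((pm i j - 1/2) + (pp i j - 1/2))
            + e j * ((pm j i - 1/2) + (pp j i - 1/2)) ≤ 1 := by
          intro j hj
          have hji : j ≠ i := (Finset.mem_erase.1 hj).1
          rw [hpmanti j i hji, hppsym j i]
          obtain ⟨hu1, hu2⟩ := hpm01 i j
          obtain ⟨hv1, hv2⟩ := hpp01 i j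
          rcases he1 i with h1 | h1 <;> rcases he1 j with h2 | h2 <;>
            rw [h1, h2] <;> nlinarith
        calc _ ≤ ∑ _j ∈ S.erase i, (1:ℝ) := Finset.sum_le_sum hterm
          _ = ((S.erase i).card : ℝ) := by simp
          _ = (S.card : ℝ) - 1 := by
              rw [Finset.card_erase_of_mem hi]
              rw [Nat.cast_sub hk1]; norm_num
      calc _ ≤ ∑ _i ∈ S, ((S.card : ℝ) - 1) := Finset.sum_le_sum hbound
        _ = (S.card : ℝ) * ((S.card : ℝ) - 1) := by
            rw [Finset.sum_const, nsmul_eq_mul]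
    linarith
  -- bound B
  have hBle : (∑ i ∈ S, ∑ j ∈ univ \ S, e i * ((pm i j - 1/2) + (pp i j - 1/2)))
      ≤ (S.card : ℝ) * ((n : ℝ) - (S.card : ℝ)) := by
    have hcard : ((univ \ S : Finset (Fin n)).card : ℝ) = (n : ℝ) - (S.card : ℝ) := by
      rw [Finset.card_sdiff_of_subset (Finset.subset_univ S)]
      rw [Nat.cast_sub (by simpa using S.card_le_univ)]
      simp
    have hbound : ∀ i ∈ S,
        (∑ j ∈ univ \ S, e i * ((pm i j - 1/2) + (pp i j - 1/2)))
          ≤ (n : ℝ) - (S.card : ℝ) := by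
      intro i _
      have hterm : ∀ j ∈ univ \ S,
          e i * ((pm i j - 1/2) + (pp i j - 1/2)) ≤ 1 := by
        intro j _
        obtain ⟨hu1, hu2⟩ := hpm01 i j
        obtain ⟨hv1, hv2⟩ := hpp01 i j
        rcases he1 i with h1 | h1 <;> rw [h1] <;> nlinarith
      calc _ ≤ ∑ _j ∈ univ \ S, (1:ℝ) := Finset.sum_le_sum hterm
        _ = ((univ \ S : Finset (Fin n)).card : ℝ) := by simp
        _ = (n : ℝ) - (S.card : ℝ) := hcard
    calc _ ≤ ∑ _i ∈ S, ((n : ℝ) - (S.card : ℝ)) := Finset.sum_le_sum hbound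
      _ = (S.card : ℝ) * ((n : ℝ) - (S.card : ℝ)) := by
          rw [Finset.sum_const, nsmul_eq_mul]
  -- bound C
  have hCle : (∑ i ∈ S, e i * (2 * (pl i - 1/2))) ≤ (S.card : ℝ) := by
    have hterm : ∀ i ∈ S, e i * (2 * (pl i - 1/2)) ≤ 1 := by
      intro i _
      obtain ⟨hl1, hl2⟩ := hpl01 i
      rcases he1 i with h1 | h1 <;> rw [h1] <;> nlinarith
    calc _ ≤ ∑ _i ∈ S, (1:ℝ) := Finset.sum_le_sum hterm
      _ = (S.card : ℝ) := by simp
  -- closed form for the RHS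
  have gauss : ∀ k : ℕ, ∑ j ∈ Finset.range k, ((n : ℝ) - (j : ℝ))
      = (k : ℝ) * (n : ℝ) - (k : ℝ) * ((k : ℝ) - 1) / 2 := by
    intro k
    induction k with
    | zero => simp
    | succ m ih =>
        rw [Finset.sum_range_succ, ih]
        push_cast
        ring
  rw [hLHS, gauss S.card]
  have key : (S.card : ℝ) * ((S.card : ℝ) - 1) / 2
      + (S.card : ℝ) * ((n : ℝ) - (S.card : ℝ)) + (S.card : ℝ)
      = (S.card : ℝ) * (n : ℝ) - (S.card : ℝ) * ((S.card : ℝ) - 1) / 2 := by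
    ring
  linarith
end
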